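/- arXiv:1302.5472 — 7 statements merged into one kernel-verified Lean document; each statement's English description precedes it below -/
import Mathlib

section
/- Let p₁, …, p_k ∈ ℝⁿ and h ∈ ℝᵏ, and let u(x) = max_i (p_i·x + h_i). If p_i is not in the convex hull of the remaining points p₁, …, p_{i−1}, p_{i+1}, …, p_k, then the Legendre–Fenchel dual satisfies u*(p_i) = −h_i. -/
/-!
The `i`-th piece alone gives `⟪x, p i⟫ - u x ≤ -h i`, so `u*(p i) ≤ -h i`. For equality one
needs a point where the `i`-th piece realises the maximum: a functional strictly separating `p i`
from the convex hull of the other slopes makes `p i` the unique steepest slope in that direction,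
so far enough along it the `i`-th piece dominates all the others.
-/

open scoped RealInnerProductSpace

open Filter

theorem Set.Finite.exists_strongDual_lt_of_notMem_convexHull {E : Type*} [TopologicalSpace E]
    [AddCommGroup E] [Module ℝ E] [IsTopologicalAddGroup E] [ContinuousSMul ℝ E]
    [LocallyConvexSpace ℝ E] [T2Space E] {s : Set E} {x : E} (hs : s.Finite)
    (hx : x ∉ convexHull ℝ s) : ∃ f : StrongDual ℝ E, ∀ y ∈ s, f y < f x := by
  obtain ⟨f, c, hlt, hcx⟩ :=
    geometric_hahn_banach_closed_point (convex_convexHull ℝ s) (hs.isClosed_convexHull ℝ) hx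
  exact ⟨f, fun y hy => (hlt y (subset_convexHull ℝ s hy)).trans hcx⟩

theorem exists_forall_mul_add_le_mul_add {ι : Type*} [Finite ι] {a : ι → ℝ} (b : ι → ℝ) {i : ι}
    (ha : ∀ j ≠ i, a j < a i) : ∃ t : ℝ, ∀ j, t * a j + b j ≤ t * a i + b i := by
  have : ∀ j, ∀ᶠ t in atTop, t * a j + b j ≤ t * a i + b i := by
    intro j
    rcases eq_or_ne j i with rfl | hji
    · exact Eventually.of_forall fun _ => le_rfl
    · have hslope : Tendsto (fun t => t * (a i - a j)) atTop atTop :=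
        tendsto_id.atTop_mul_const (sub_pos.2 (ha j hji))
      filter_upwards [hslope.eventually_ge_atTop (b j - b i)] with t ht
      linarith
  exact (eventually_all.2 this).exists

theorem exists_inner_add_le_of_notMem_convexHull {E : Type*} [NormedAddCommGroup E]
    [InnerProductSpace ℝ E] [CompleteSpace E] {ι : Type*} [Finite ι] {p : ι → E} {i : ι}
    (hi : p i ∉ convexHull ℝ (p '' {j | j ≠ i})) (h : ι → ℝ) :
    ∃ x, ∀ j, ⟪p j, x⟫ + h j ≤ ⟪p i, x⟫ + h i := by
  obtain ⟨f, hf⟩ := ((Set.toFinite _).image p).exists_strongDual_lt_of_notMem_convexHull hi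
  obtain ⟨t, ht⟩ := exists_forall_mul_add_le_mul_add h (a := fun j => f (p j)) (i := i)
    fun j hj => hf _ ⟨j, hj, rfl⟩
  set v := (InnerProductSpace.toDual ℝ E).symm f
  have hinner : ∀ y, ⟪y, t • v⟫ = t * f y := fun y => by
    rw [real_inner_smul_right, real_inner_comm, InnerProductSpace.toDual_symm_apply]
  exact ⟨t • v, fun j => by simpa only [hinner] using ht j⟩

/-- If `p i` is not in the convex hull of the remaining points, then the
Legendre–Fenchel dual of `u_h(x) = max_j (⟪p j, x⟫ + h j)` satisfies `u*(p i) = -h i`. -/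
theorem dual_value_at_vertex (n k : ℕ) [NeZero k]
    (p : Fin k → EuclideanSpace ℝ (Fin n)) (h : Fin k → ℝ) (i : Fin k)
    (hi : p i ∉ convexHull ℝ (p '' {j | j ≠ i}))
    (u : EuclideanSpace ℝ (Fin n) → ℝ)
    (hu : ∀ x, u x = Finset.univ.sup' Finset.univ_nonempty (fun j => ⟪p j, x⟫ + h j))
    (ustar : EuclideanSpace ℝ (Fin n) → EReal)
    (hustar : ∀ y, ustar y = ⨆ x : EuclideanSpace ℝ (Fin n), ((⟪x, y⟫ - u x : ℝ) : EReal)) :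
    ustar (p i) = ((-h i : ℝ) : EReal) := by
  have hle : ∀ x, ⟪p i, x⟫ + h i ≤ u x := fun x => by
    rw [hu]; exact Finset.le_sup' (fun j => ⟪p j, x⟫ + h j) (Finset.mem_univ i)
  obtain ⟨x₀, hx₀⟩ := exists_inner_add_le_of_notMem_convexHull hi h
  have hux₀ : u x₀ = ⟪p i, x₀⟫ + h i :=
    le_antisymm (by rw [hu]; exact Finset.sup'_le _ _ fun j _ => hx₀ j) (hle x₀)
  rw [hustar]
  refine le_antisymm (iSup_le fun x => EReal.coe_le_coe_iff.2 ?_) (le_iSup_of_le x₀ ?_)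
  · linarith [hle x, real_inner_comm x (p i)]
  · rw [hux₀, real_inner_comm]
    exact EReal.coe_le_coe_iff.2 (by linarith)
end

section
/- Let p₁, …, p_k ∈ ℝⁿ. If conv(p₁,…,p_{i−1},p_{i+1},…,p_k) is n-dimensional and p_i lies in its interior, then for any h ∈ ℝᵏ the set W_i(h) = { x : x·p_i + h_i ≥ x·p_j + h_j ∀j } is either bounded or empty. -/
open scoped RealInnerProductSpace

/-- If `p i` lies in the (topological) interior of the convex hull of the remaining
points (which is then `n`-dimensional), then for any `h` the cell `W_i(h)` is
either bounded or empty. -/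
theorem cell_bounded_or_empty (n k : ℕ)
    (p : Fin k → EuclideanSpace ℝ (Fin n)) (i : Fin k)
    (hi : p i ∈ interior (convexHull ℝ (p '' {j | j ≠ i})))
    (h : Fin k → ℝ)
    (W : Set (EuclideanSpace ℝ (Fin n)))
    (hW : W = {x | ∀ j, ⟪x, p j⟫ + h j ≤ ⟪x, p i⟫ + h i}) :
    Bornology.IsBounded W ∨ W = ∅ := by
  left
  -- get a ball around p i inside the convex hull
  obtain ⟨ε, hε, hball⟩ := Metric.isOpen_iff.mp isOpen_interior _ hi
  have hballhull : Metric.ball (p i) ε ⊆ convexHull ℝ (p '' {j | j ≠ i}) :=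
    hball.trans interior_subset
  -- the constant
  set C : ℝ := Finset.univ.sup' ⟨i, Finset.mem_univ i⟩ (fun j => h i - h j) with hC
  have hC0 : 0 ≤ C := by
    have : h i - h i ≤ C := Finset.le_sup' (f := fun j => h i - h j) (Finset.mem_univ i)
    linarith
  rw [isBounded_iff_forall_norm_le]
  refine ⟨2 * C / ε, ?_⟩
  intro x hx
  rw [hW] at hx
  by_cases hx0 : x = 0
  · simp [hx0]
    positivity
  -- the halfspace
  have hlin : IsLinearMap ℝ (fun y : EuclideanSpace ℝ (Fin n) => ⟪x, y⟫) :=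
    ⟨fun a b => by simp [inner_add_right],
     fun c a => by simp [inner_smul_right]⟩
  have hconv : Convex ℝ {y : EuclideanSpace ℝ (Fin n) | ⟪x, y⟫ ≤ ⟪x, p i⟫ + C} :=
    convex_halfSpace_le hlin _
  have hsub : p '' {j | j ≠ i} ⊆ {y : EuclideanSpace ℝ (Fin n) | ⟪x, y⟫ ≤ ⟪x, p i⟫ + C} := by
    rintro _ ⟨j, hj, rfl⟩
    have h1 : ⟪x, p j⟫ + h j ≤ ⟪x, p i⟫ + h i := hx j
    have h2 : h i - h j ≤ C := Finset.le_sup' (f := fun j => h i - h j) (Finset.mem_univ j)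
    simp only [Set.mem_setOf_eq]
    linarith
  have hhull : convexHull ℝ (p '' {j | j ≠ i}) ⊆
      {y : EuclideanSpace ℝ (Fin n) | ⟪x, y⟫ ≤ ⟪x, p i⟫ + C} :=
    convexHull_min hsub hconv
  -- test point
  set y : EuclideanSpace ℝ (Fin n) := p i + (ε / 2) • (‖x‖⁻¹ • x) with hy
  have hxnorm : ‖x‖ > 0 := norm_pos_iff.mpr hx0
  have hymem : y ∈ Metric.ball (p i) ε := by
    have : dist y (p i) = ε / 2 := by
      rw [hy, dist_eq_norm]
      simp [norm_smul, abs_of_pos hε, abs_of_nonneg (le_of_lt hε), norm_smul,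
        abs_of_nonneg (inv_nonneg.mpr (norm_nonneg x)), inv_mul_cancel₀ (ne_of_gt hxnorm)]
    rw [Metric.mem_ball, this]
    linarith
  have hyle : ⟪x, y⟫ ≤ ⟪x, p i⟫ + C := hhull (hballhull hymem)
  have hinner : ⟪x, y⟫ = ⟪x, p i⟫ + (ε / 2) * ‖x‖⁻¹ * ⟪x, x⟫ := by
    rw [hy]
    simp [inner_add_right, inner_smul_right]
    ring
  rw [hinner] at hyle
  have hxx : ⟪x, x⟫ = ‖x‖ ^ 2 := real_inner_self_eq_norm_sq x
  rw [hxx] at hyle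
  have key : (ε / 2) * ‖x‖ ≤ C := by
    have : (ε / 2) * ‖x‖⁻¹ * ‖x‖ ^ 2 = (ε / 2) * ‖x‖ := by
      field_simp
    linarith [this ▸ hyle]
  rw [le_div_iff₀ hε]
  linarith
end

section
/- With X, f, τ, W as above, W is differentiable at t₀ > 0 if and only if ∫_{{x ∈ X : f(x) = t₀}} τ(x, t₀) dx = 0. -/
/-!
For each `x`, the map `t ↦ ∫₀^{min t (f x)} τ(x, s) ds` has right derivative `τ(x, t₀)·[t₀ < f x]`
and left derivative `τ(x, t₀)·[t₀ ≤ f x]` at `t₀`, and its difference quotients are bounded by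
`sup |τ|`. By dominated convergence `W` has the one-sided derivatives `∫_{f > t₀} τ(·, t₀)` and
`∫_{f ≥ t₀} τ(·, t₀)`, which differ exactly by the integral over the level set `{f = t₀}`.
To have globally defined, bounded data, `f` and `τ` are first replaced by Tietze extensions;
for `t > 0` this does not change `W`.
-/

open MeasureTheory Filter Topology Set

theorem differentiableAt_iff_of_hasDerivWithinAt_Ioi_Iio {V : ℝ → ℝ} {t₀ a b : ℝ}
    (hR : HasDerivWithinAt V a (Ioi t₀) t₀) (hL : HasDerivWithinAt V b (Iio t₀) t₀) :
    DifferentiableAt ℝ V t₀ ↔ a = b := by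
  refine ⟨fun h => ?_, fun hab => ?_⟩
  · have hD := h.hasDerivAt
    rw [(uniqueDiffWithinAt_Ioi t₀).eq_deriv _ hR hD.hasDerivWithinAt,
      (uniqueDiffWithinAt_Iio t₀).eq_deriv _ hL hD.hasDerivWithinAt]
  · subst hab
    have := hL.Iic_of_Iio.union hR.Ici_of_Ioi
    rw [Iic_union_Ici, hasDerivWithinAt_univ] at this
    exact this.differentiableAt

theorem hasDerivWithinAt_min_const_Ioi (t₀ c : ℝ) :
    HasDerivWithinAt (fun t => min t c) (if t₀ < c then 1 else 0) (Ioi t₀) t₀ := by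
  split_ifs with h
  · refine (hasDerivAt_id t₀).hasDerivWithinAt.congr_of_eventuallyEq ?_ (min_eq_left h.le)
    filter_upwards [Ioo_mem_nhdsGT h] with t ht using min_eq_left ht.2.le
  · exact (hasDerivWithinAt_const t₀ _ c).congr
      (fun t ht => min_eq_right ((not_lt.1 h).trans (mem_Ioi.1 ht).le)) (min_eq_right (not_lt.1 h))

theorem hasDerivWithinAt_min_const_Iio (t₀ c : ℝ) :
    HasDerivWithinAt (fun t => min t c) (if t₀ ≤ c then 1 else 0) (Iio t₀) t₀ := by
  split_ifs with h
  · exact (hasDerivAt_id t₀).hasDerivWithinAt.congr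
      (fun t ht => min_eq_left ((mem_Iio.1 ht).le.trans h)) (min_eq_left h)
  · refine (hasDerivWithinAt_const t₀ _ c).congr_of_eventuallyEq ?_ (min_eq_right (not_le.1 h).le)
    filter_upwards [Ioo_mem_nhdsLT (not_le.1 h)] with t ht using min_eq_right ht.1.le

theorem hasDerivWithinAt_integral_min_Ioi {φ : ℝ → ℝ} (hφ : Continuous φ) (a t₀ c : ℝ) :
    HasDerivWithinAt (fun t => ∫ s in a..min t c, φ s) (if t₀ < c then φ t₀ else 0)
      (Ioi t₀) t₀ := by
  refine ((hφ.integral_hasStrictDerivAt a (min t₀ c)).hasDerivAt.comp_hasDerivWithinAt t₀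
    (hasDerivWithinAt_min_const_Ioi t₀ c)).congr_deriv ?_
  split_ifs with h
  · simp [min_eq_left h.le]
  · simp

theorem hasDerivWithinAt_integral_min_Iio {φ : ℝ → ℝ} (hφ : Continuous φ) (a t₀ c : ℝ) :
    HasDerivWithinAt (fun t => ∫ s in a..min t c, φ s) (if t₀ ≤ c then φ t₀ else 0)
      (Iio t₀) t₀ := by
  refine ((hφ.integral_hasStrictDerivAt a (min t₀ c)).hasDerivAt.comp_hasDerivWithinAt t₀
    (hasDerivWithinAt_min_const_Iio t₀ c)).congr_deriv ?_
  split_ifs with h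
  · simp [min_eq_left h]
  · simp

theorem norm_slope_integral_min_le {φ : ℝ → ℝ} {M : ℝ} (hφ : Continuous φ) (hM : ∀ s, ‖φ s‖ ≤ M)
    (a c t₀ t : ℝ) : ‖slope (fun t => ∫ s in a..min t c, φ s) t₀ t‖ ≤ M := by
  have hM₀ : 0 ≤ M := (norm_nonneg _).trans (hM 0)
  rw [slope_def_field, intervalIntegral.integral_interval_sub_left (hφ.intervalIntegrable _ _)
    (hφ.intervalIntegrable _ _), norm_div, Real.norm_eq_abs (_ - _)]
  refine div_le_of_le_mul₀ (abs_nonneg _) hM₀ ?_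
  calc ‖∫ s in min t₀ c..min t c, φ s‖ ≤ M * |min t c - min t₀ c| :=
        intervalIntegral.norm_integral_le_of_norm_le_const (C := M) fun s _ => hM s
    _ ≤ M * |t - t₀| :=
        mul_le_mul_of_nonneg_left (by simpa using abs_min_sub_min_le_max t c t₀ c) hM₀

theorem hasDerivWithinAt_integral_of_norm_slope_le {α : Type*} [MeasurableSpace α]
    {μ : Measure α} [IsFiniteMeasure μ] {g : ℝ → α → ℝ} {g' : α → ℝ} {s : Set ℝ} {t₀ M : ℝ}
    (hs : t₀ ∉ s) (hg : ∀ t, Integrable (g t) μ)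
    (hslope : ∀ t ∈ s, ∀ᵐ x ∂μ, ‖slope (g · x) t₀ t‖ ≤ M)
    (hderiv : ∀ᵐ x ∂μ, HasDerivWithinAt (g · x) (g' x) s t₀) :
    HasDerivWithinAt (fun t => ∫ x, g t x ∂μ) (∫ x, g' x ∂μ) s t₀ := by
  have slope_integral : slope (fun t => ∫ x, g t x ∂μ) t₀ =
      fun t => ∫ x, slope (g · x) t₀ t ∂μ := by
    ext t
    simp only [slope_def_field, ← integral_sub (hg t) (hg t₀), integral_div]
  simp only [hasDerivWithinAt_iff_tendsto_slope' hs, slope_integral] at hderiv ⊢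
  refine tendsto_integral_filter_of_dominated_convergence (fun _ => M)
    (Eventually.of_forall fun t => ?_) (eventually_nhdsWithin_of_forall hslope)
    (integrable_const M) hderiv
  simp only [slope_def_field]
  exact (((hg t).sub (hg t₀)).div_const _).aestronglyMeasurable

section

variable {α : Type*} [TopologicalSpace α] [MeasurableSpace α] [OpensMeasurableSpace α]
  {μ : Measure α} [IsFiniteMeasure μ] {F : α → ℝ} {σ : α × ℝ → ℝ} {M : ℝ}

theorem integrable_integral_min (hF : Continuous F) (hFμ : Integrable F μ) (hσ : Continuous σ)
    (hM : ∀ p, ‖σ p‖ ≤ M) (a t : ℝ) :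
    Integrable (fun x => ∫ s in a..min t (F x), σ (x, s)) μ := by
  have hcont : Continuous fun x => ∫ s in a..min t (F x), σ (x, s) :=
    intervalIntegral.continuous_parametric_intervalIntegral_of_continuous (f := fun x s => σ (x, s))
      hσ (continuous_const.min hF)
  refine ((integrable_const (M * (|t| + |a|))).add (hFμ.norm.const_mul M)).mono'
    hcont.aestronglyMeasurable (ae_of_all _ fun x => ?_)
  have hM₀ : 0 ≤ M := (norm_nonneg _).trans (hM (x, 0))
  have hmin : |min t (F x) - a| ≤ |t| + |a| + ‖F x‖ := by
    rw [Real.norm_eq_abs]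
    have h₁ := abs_min_le_max_abs_abs (a := t) (b := F x)
    have h₂ := abs_sub (min t (F x)) a
    have h₃ := max_le_add_of_nonneg (abs_nonneg t) (abs_nonneg (F x))
    linarith
  calc ‖∫ s in a..min t (F x), σ (x, s)‖ ≤ M * |min t (F x) - a| :=
        intervalIntegral.norm_integral_le_of_norm_le_const fun s _ => hM (x, s)
    _ ≤ M * (|t| + |a|) + M * ‖F x‖ := by nlinarith

theorem hasDerivWithinAt_integral_integral_min_Ioi (hF : Continuous F) (hFμ : Integrable F μ)
    (hσ : Continuous σ) (hM : ∀ p, ‖σ p‖ ≤ M) (a t₀ : ℝ) :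
    HasDerivWithinAt (fun t => ∫ x, (∫ s in a..min t (F x), σ (x, s)) ∂μ)
      (∫ x in {x | t₀ < F x}, σ (x, t₀) ∂μ) (Ioi t₀) t₀ := by
  rw [← integral_indicator (isOpen_lt continuous_const hF).measurableSet]
  refine hasDerivWithinAt_integral_of_norm_slope_le (M := M) (lt_irrefl t₀)
    (integrable_integral_min hF hFμ hσ hM a) (fun t _ => ae_of_all _ fun x => ?_)
    (ae_of_all _ fun x => ?_)
  · exact norm_slope_integral_min_le (by fun_prop) (fun s => hM (x, s)) a (F x) t₀ t
  · simpa [indicator_apply] using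
      hasDerivWithinAt_integral_min_Ioi (φ := fun s => σ (x, s)) (by fun_prop) a t₀ (F x)

theorem hasDerivWithinAt_integral_integral_min_Iio (hF : Continuous F) (hFμ : Integrable F μ)
    (hσ : Continuous σ) (hM : ∀ p, ‖σ p‖ ≤ M) (a t₀ : ℝ) :
    HasDerivWithinAt (fun t => ∫ x, (∫ s in a..min t (F x), σ (x, s)) ∂μ)
      (∫ x in {x | t₀ ≤ F x}, σ (x, t₀) ∂μ) (Iio t₀) t₀ := by
  rw [← integral_indicator (isClosed_le continuous_const hF).measurableSet]
  refine hasDerivWithinAt_integral_of_norm_slope_le (M := M) (lt_irrefl t₀)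
    (integrable_integral_min hF hFμ hσ hM a) (fun t _ => ae_of_all _ fun x => ?_)
    (ae_of_all _ fun x => ?_)
  · exact norm_slope_integral_min_le (by fun_prop) (fun s => hM (x, s)) a (F x) t₀ t
  · simpa [indicator_apply] using
      hasDerivWithinAt_integral_min_Iio (φ := fun s => σ (x, s)) (by fun_prop) a t₀ (F x)

theorem differentiableAt_integral_integral_min_iff (hF : Continuous F) (hFμ : Integrable F μ)
    (hσ : Continuous σ) (hM : ∀ p, ‖σ p‖ ≤ M) (a t₀ : ℝ) :
    DifferentiableAt ℝ (fun t => ∫ x, (∫ s in a..min t (F x), σ (x, s)) ∂μ) t₀ ↔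
      ∫ x in {x | F x = t₀}, σ (x, t₀) ∂μ = 0 := by
  have hσ₀ : Integrable (fun x => σ (x, t₀)) μ :=
    (integrable_const M).mono' (by fun_prop : Continuous _).aestronglyMeasurable
      (ae_of_all _ fun x => hM (x, t₀))
  have hsplit : {x | t₀ ≤ F x} = {x | t₀ < F x} ∪ {x | F x = t₀} := by
    ext x
    simp [le_iff_lt_or_eq, eq_comm]
  rw [differentiableAt_iff_of_hasDerivWithinAt_Ioi_Iio
      (hasDerivWithinAt_integral_integral_min_Ioi hF hFμ hσ hM a t₀)
      (hasDerivWithinAt_integral_integral_min_Iio hF hFμ hσ hM a t₀), hsplit,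
    setIntegral_union (disjoint_left.2 fun x h₁ h₂ => h₁.ne' h₂)
      (isClosed_eq hF continuous_const).measurableSet hσ₀.integrableOn hσ₀.integrableOn,
    left_eq_add]

end

open BoundedContinuousFunction in
theorem IsCompact.exists_boundedContinuousFunction_eqOn {Y : Type*} [TopologicalSpace Y]
    [T2Space Y] [NormalSpace Y] {K : Set Y} (hK : IsCompact K) {f : Y → ℝ}
    (hf : ContinuousOn f K) : ∃ g : Y →ᵇ ℝ, EqOn g f K := by
  have := isCompact_iff_compactSpace.mp hK
  obtain ⟨g, -, hg⟩ := BoundedContinuousFunction.exists_norm_eq_domRestrict_eq_of_closed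
    (BoundedContinuousFunction.mkOfCompact ⟨K.domRestrict f, hf.domRestrict⟩) hK.isClosed
  exact ⟨g, fun x hx => DFunLike.congr_fun hg ⟨x, hx⟩⟩

theorem IsCompact.nonneg_hypograph {Y : Type*} [TopologicalSpace Y] [T2Space Y] {X : Set Y}
    (hX : IsCompact X) {f : Y → ℝ} (hf : ContinuousOn f X) :
    IsCompact {q : Y × ℝ | q.1 ∈ X ∧ 0 ≤ q.2 ∧ q.2 ≤ f q.1} := by
  obtain ⟨C, hC⟩ := hX.exists_bound_of_continuousOn hf
  have hcont : ContinuousOn (fun q : Y × ℝ => (q.2, f q.1)) (X ×ˢ univ) :=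
    continuousOn_snd.prodMk (hf.comp continuousOn_fst fun q hq => hq.1)
  refine (hX.prod (isCompact_Icc (a := 0) (b := C))).of_isClosed_subset ?_ ?_
  · convert hcont.preimage_isClosed_of_isClosed (hX.isClosed.prod isClosed_univ)
      ((isClosed_le continuous_const continuous_fst : IsClosed {p : ℝ × ℝ | 0 ≤ p.1}).inter
        (isClosed_le continuous_fst continuous_snd)) using 1
    ext q
    simp
  · rintro ⟨x, s⟩ ⟨hx, hs₀, hs⟩
    exact ⟨hx, hs₀, hs.trans ((le_abs_self _).trans (hC x hx))⟩

section

variable {α : Type*} [MeasurableSpace α] {μ : Measure α} {X : Set α} {f F : α → ℝ}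
  {τ : α → ℝ → ℝ} {σ : α × ℝ → ℝ}

theorem setIntegral_integral_min_congr (hX : MeasurableSet X) (hf0 : ∀ x ∈ X, 0 ≤ f x)
    (hFf : EqOn F f X) (hστ : EqOn σ (fun q => τ q.1 q.2) {q | q.1 ∈ X ∧ 0 ≤ q.2 ∧ q.2 ≤ f q.1})
    {t : ℝ} (ht : 0 ≤ t) :
    ∫ x in X, (∫ s in (0:ℝ)..min t (f x), τ x s) ∂μ =
      ∫ x in X, (∫ s in (0:ℝ)..min t (F x), σ (x, s)) ∂μ := by
  refine setIntegral_congr_fun hX fun x hx => ?_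
  rw [hFf hx]
  refine intervalIntegral.integral_congr fun s hs => (hστ (x := (x, s)) ⟨hx, ?_⟩).symm
  rw [uIcc_of_le (le_min ht (hf0 x hx))] at hs
  exact ⟨hs.1, hs.2.trans (min_le_right _ _)⟩

theorem setIntegral_level_congr (hX : MeasurableSet X) (hF : Measurable F) (hFf : EqOn F f X)
    (hστ : EqOn σ (fun q => τ q.1 q.2) {q | q.1 ∈ X ∧ 0 ≤ q.2 ∧ q.2 ≤ f q.1})
    {t₀ : ℝ} (ht₀ : 0 ≤ t₀) :
    ∫ x in {x ∈ X | f x = t₀}, τ x t₀ ∂μ = ∫ x in {x | F x = t₀}, σ (x, t₀) ∂μ.restrict X := by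
  have hlevel : MeasurableSet {x | F x = t₀} := hF (measurableSet_singleton t₀)
  have hset : {x ∈ X | f x = t₀} = {x | F x = t₀} ∩ X := by
    ext x
    constructor
    · rintro ⟨hx, hx₀⟩
      exact ⟨(hFf hx).trans hx₀, hx⟩
    · rintro ⟨hx₀, hx⟩
      exact ⟨hx, (hFf hx).symm.trans hx₀⟩
  rw [Measure.restrict_restrict hlevel, hset]
  refine setIntegral_congr_fun (hlevel.inter hX) fun x hx =>
    (hστ (x := (x, t₀)) ⟨hx.2, ht₀, ?_⟩).symm
  rw [← hFf hx.2, hx.1]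

end

/-- `W` is differentiable at `t₀ > 0` iff the integral of `τ(·, t₀)` over the
level set `{x ∈ X | f x = t₀}` vanishes. -/
theorem differentiable_iff_level_integral_zero (n : ℕ)
    (X : Set (EuclideanSpace ℝ (Fin n))) (hX : IsCompact X)
    (f : EuclideanSpace ℝ (Fin n) → ℝ) (hf : ContinuousOn f X)
    (hf0 : ∀ x ∈ X, 0 ≤ f x)
    (τ : EuclideanSpace ℝ (Fin n) → ℝ → ℝ)
    (hτ : ContinuousOn (fun q : EuclideanSpace ℝ (Fin n) × ℝ => τ q.1 q.2)
      {q | q.1 ∈ X ∧ 0 ≤ q.2 ∧ q.2 ≤ f q.1})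
    (W : ℝ → ℝ)
    (hW : ∀ t, W t = ∫ x in X, ∫ s in (0:ℝ)..(min t (f x)), τ x s)
    (t₀ : ℝ) (ht₀ : 0 < t₀) :
    DifferentiableAt ℝ W t₀ ↔ (∫ x in {x ∈ X | f x = t₀}, τ x t₀) = 0 := by
  obtain ⟨F, hFf⟩ := hX.exists_boundedContinuousFunction_eqOn hf
  obtain ⟨σ, hστ⟩ := (hX.nonneg_hypograph hf).exists_boundedContinuousFunction_eqOn hτ
  have : IsFiniteMeasure (volume.restrict X) := isFiniteMeasure_restrict.2 hX.measure_ne_top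
  have hWσ : W =ᶠ[𝓝 t₀] fun t => ∫ x in X, ∫ s in (0:ℝ)..min t (F x), σ (x, s) := by
    filter_upwards [Ioi_mem_nhds ht₀] with t ht
    rw [hW t, setIntegral_integral_min_congr hX.measurableSet hf0 hFf hστ ht.le]
  rw [hWσ.differentiableAt_iff,
    setIntegral_level_congr hX.measurableSet F.continuous.measurable hFf hστ ht₀.le]
  exact differentiableAt_integral_integral_min_iff F.continuous (F.integrable _) σ.continuous
    σ.norm_coe_le_norm 0 t₀
end

section
/- Let Ω ⊂ ℝⁿ be a compact convex domain and p₁,…,p_k ∈ ℝⁿ distinct. Then the set H = { h ∈ ℝᵏ : vol(W_i(h) ∩ Ω) > 0 for all i } is a nonempty open convex subset of ℝᵏ. -/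
/-!
Off the hyperplanes `⟪x, p j - p i⟫ = h i - h j`, which are null because the `p j` are distinct,
the cell `W_i(h)` agrees with the open "strict" cell where `i` is the unique maximiser; and a
convex `Ω` agrees with its interior up to its null frontier. Hence `vol (W_i(h) ∩ Ω) > 0` exactly
when the strict cell meets `interior Ω`. That condition is open in `h` (finitely many strict
inequalities) and convex in `h` (the inequalities are jointly affine in `(x, h)`). For the
Voronoi heights `-‖p j‖² / 2` every site lies in its own strict cell, and rescaling this picture
into a small ball around an interior point of `Ω` shows that admissible heights exist.
-/

open MeasureTheory
open scoped RealInnerProductSpace Topology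

section

variable {E : Type*} [NormedAddCommGroup E] [NormedSpace ℝ E] [MeasurableSpace E] [BorelSpace E]
  [FiniteDimensional ℝ E] (μ : Measure E) [μ.IsAddHaarMeasure]

theorem addHaar_linearMap_preimage_singleton {f : E →ₗ[ℝ] ℝ} (hf : f ≠ 0) (c : ℝ) :
    μ (f ⁻¹' {c}) = 0 := by
  rcases (f ⁻¹' {c}).eq_empty_or_nonempty with hempty | ⟨x₀, hx₀ : f x₀ = c⟩
  · rw [hempty, measure_empty]
  have htranslate : f ⁻¹' {c} = (· + -x₀) ⁻¹' (LinearMap.ker f : Set E) := by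
    ext x
    simp [hx₀, add_neg_eq_zero]
  rw [htranslate, measure_preimage_add_right]
  exact Measure.addHaar_submodule μ _ (by rwa [Ne, LinearMap.ker_eq_top])

end

theorem isOpen_setOf_forall_ne_lt {ι X : Type*} [TopologicalSpace X] [Finite ι]
    {f g : ι → X → ℝ} (hf : ∀ j, Continuous (f j)) (hg : ∀ j, Continuous (g j)) (i : ι) :
    IsOpen {z | ∀ j ≠ i, f j z < g j z} := by
  simp only [Set.ofPred_forall]
  exact isOpen_iInter_of_finite fun j => isOpen_iInter_of_finite fun _ => isOpen_lt (hf j) (hg j)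

namespace MaxAffine

variable {E ι : Type*} [NormedAddCommGroup E] [InnerProductSpace ℝ E]

/-- The cell `W_i(h)` of `x ↦ max_j (⟪x, p j⟫ + h j)`. -/
def cell (p : ι → E) (h : ι → ℝ) (i : ι) : Set E :=
  {x | ∀ j, ⟪x, p j⟫ + h j ≤ ⟪x, p i⟫ + h i}

def strictCell (p : ι → E) (h : ι → ℝ) (i : ι) : Set E :=
  {x | ∀ j ≠ i, ⟪x, p j⟫ + h j < ⟪x, p i⟫ + h i}

def admissibleHeights (p : ι → E) (U : Set E) : Set (ι → ℝ) :=
  {h | ∀ i, (strictCell p h i ∩ U).Nonempty}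

variable {p : ι → E} {h : ι → ℝ} {i : ι}

theorem strictCell_subset_cell : strictCell p h i ⊆ cell p h i := by
  intro x hx j
  rcases eq_or_ne j i with rfl | hj
  · exact le_rfl
  · exact (hx j hj).le

theorem isOpen_strictCell [Finite ι] : IsOpen (strictCell p h i) :=
  isOpen_setOf_forall_ne_lt (fun _ => by fun_prop) (fun _ => by fun_prop) i

theorem isOpen_setOf_mem_strictCell [Finite ι] (p : ι → E) (x : E) (i : ι) :
    IsOpen {h : ι → ℝ | x ∈ strictCell p h i} :=
  isOpen_setOf_forall_ne_lt (fun _ => by fun_prop) (fun _ => by fun_prop) i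

theorem add_smul_mem_strictCell {x : E} (hx : x ∈ strictCell p h i) (x₀ : E) {ε : ℝ}
    (hε : 0 < ε) : x₀ + ε • x ∈ strictCell p (fun j => ε * h j - ⟪x₀, p j⟫) i := by
  intro j hj
  simp only [inner_add_left, real_inner_smul_left]
  nlinarith [mul_lt_mul_of_pos_left (hx j hj) hε]

theorem convex_combo_mem_strictCell {x y : E} {h' : ι → ℝ} (hx : x ∈ strictCell p h i)
    (hy : y ∈ strictCell p h' i) {a b : ℝ} (ha : 0 ≤ a) (hb : 0 ≤ b) (hab : a + b = 1) :
    a • x + b • y ∈ strictCell p (a • h + b • h') i := by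
  intro j hj
  have hcombo := convex_Iio (0 : ℝ) (sub_neg.2 (hx j hj)) (sub_neg.2 (hy j hj)) ha hb hab
  simp only [Set.mem_Iio, smul_eq_mul] at hcombo
  simp only [Pi.add_apply, Pi.smul_apply, smul_eq_mul, inner_add_left, real_inner_smul_left]
  linarith

theorem mem_strictCell_neg_half_norm_sq (hp : Function.Injective p) (i : ι) :
    p i ∈ strictCell p (fun j => -(‖p j‖ ^ 2 / 2)) i := by
  intro j hj
  have hdist : 0 < ‖p i - p j‖ ^ 2 := pow_pos (norm_pos_iff.2 (sub_ne_zero.2 (hp.ne hj.symm))) 2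
  rw [norm_sub_sq_real] at hdist
  dsimp only
  rw [real_inner_self_eq_norm_sq]
  linarith [real_inner_comm (p i) (p j)]

section Measure

variable [Finite ι] [FiniteDimensional ℝ E] [MeasurableSpace E] [BorelSpace E] (μ : Measure E)
  [μ.IsAddHaarMeasure]

theorem cell_ae_eq_strictCell (hp : Function.Injective p) :
    cell p h i =ᵐ[μ] strictCell p h i := by
  refine ae_eq_set.2 ⟨?_, by rw [Set.sdiff_eq_empty.2 strictCell_subset_cell, measure_empty]⟩
  have hsub : cell p h i \ strictCell p h i ⊆
      ⋃ j, ⋃ (_ : j ≠ i), (innerₛₗ ℝ (p j - p i)) ⁻¹' {h i - h j} := by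
    rintro x ⟨hle, hnlt⟩
    obtain ⟨j, hj, hge⟩ : ∃ j ≠ i, ⟪x, p i⟫ + h i ≤ ⟪x, p j⟫ + h j := by
      simpa [strictCell] using hnlt
    simp only [Set.mem_iUnion, Set.mem_preimage, Set.mem_singleton_iff, innerₛₗ_apply_apply,
      real_inner_comm x, inner_sub_right]
    exact ⟨j, hj, by linarith [hle j]⟩
  refine measure_mono_null hsub (measure_iUnion_null fun j => measure_iUnion_null fun hj => ?_)
  refine addHaar_linearMap_preimage_singleton μ (fun hzero => ?_) _
  have hself := LinearMap.congr_fun hzero (p j - p i)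
  rw [innerₛₗ_apply_apply, LinearMap.zero_apply, inner_self_eq_zero, sub_eq_zero] at hself
  exact hj (hp hself)

theorem measure_cell_inter_pos_iff (hp : Function.Injective p) {Ω : Set E} (hΩ : Convex ℝ Ω) :
    0 < μ (cell p h i ∩ Ω) ↔ (strictCell p h i ∩ interior Ω).Nonempty := by
  have hae : (cell p h i ∩ Ω : Set E) =ᵐ[μ] (strictCell p h i ∩ interior Ω : Set E) :=
    (cell_ae_eq_strictCell μ hp).inter
      (interior_ae_eq_of_null_frontier (hΩ.addHaar_frontier μ)).symm
  rw [measure_congr hae, (isOpen_strictCell.inter isOpen_interior).measure_pos_iff μ]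

theorem setOf_forall_measure_cell_inter_pos (hp : Function.Injective p) {Ω : Set E}
    (hΩ : Convex ℝ Ω) :
    {h | ∀ i, 0 < μ (cell p h i ∩ Ω)} = admissibleHeights p (interior Ω) := by
  ext h
  exact forall_congr' fun i => measure_cell_inter_pos_iff μ hp hΩ

end Measure

theorem isOpen_admissibleHeights [Finite ι] (p : ι → E) (U : Set E) :
    IsOpen (admissibleHeights p U) := by
  have hunion : admissibleHeights p U = ⋂ i, ⋃ x ∈ U, {h | x ∈ strictCell p h i} := by
    ext h
    simp [admissibleHeights, Set.Nonempty, and_comm]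
  rw [hunion]
  exact isOpen_iInter_of_finite fun i =>
    isOpen_biUnion fun x _ => isOpen_setOf_mem_strictCell p x i

theorem convex_admissibleHeights {U : Set E} (hU : Convex ℝ U) :
    Convex ℝ (admissibleHeights p U) := by
  intro h hh h' hh' a b ha hb hab i
  obtain ⟨x, hx, hxU⟩ := hh i
  obtain ⟨y, hy, hyU⟩ := hh' i
  exact ⟨a • x + b • y, convex_combo_mem_strictCell hx hy ha hb hab, hU hxU hyU ha hb hab⟩

theorem admissibleHeights_nonempty [Finite ι] (hp : Function.Injective p) {U : Set E}
    (hU : IsOpen U) (hUne : U.Nonempty) : (admissibleHeights p U).Nonempty := by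
  obtain ⟨x₀, hx₀⟩ := hUne
  have hnear : ∀ᶠ ε : ℝ in 𝓝 0, ∀ i, x₀ + ε • p i ∈ U := by
    refine Filter.eventually_all.2 fun i => ?_
    have hcont : Filter.Tendsto (fun ε : ℝ => x₀ + ε • p i) (𝓝 0) (𝓝 x₀) :=
      Continuous.tendsto' (by fun_prop) 0 x₀ (by simp)
    exact hcont.eventually (hU.mem_nhds hx₀)
  obtain ⟨ε, hεU, hε⟩ :=
    ((hnear.filter_mono nhdsWithin_le_nhds).and (self_mem_nhdsWithin (s := Set.Ioi 0))).exists
  exact ⟨_, fun i =>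
    ⟨_, add_smul_mem_strictCell (mem_strictCell_neg_half_norm_sq hp i) x₀ hε, hεU i⟩⟩

end MaxAffine

theorem admissible_heights_open_convex_nonempty_general (n k : ℕ)
    (Ω : Set (EuclideanSpace ℝ (Fin n))) (hΩconv : Convex ℝ Ω)
    (hΩint : (interior Ω).Nonempty)
    (p : Fin k → EuclideanSpace ℝ (Fin n)) (hp : Function.Injective p)
    (H : Set (Fin k → ℝ))
    (hH : H = {h | ∀ i, 0 < volume
      ({x : EuclideanSpace ℝ (Fin n) | ∀ j, ⟪x, p j⟫ + h j ≤ ⟪x, p i⟫ + h i} ∩ Ω)}) :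
    H.Nonempty ∧ IsOpen H ∧ Convex ℝ H := by
  have hH' : H = MaxAffine.admissibleHeights p (interior Ω) :=
    hH.trans (MaxAffine.setOf_forall_measure_cell_inter_pos volume hp hΩconv)
  subst hH'
  exact ⟨MaxAffine.admissibleHeights_nonempty hp isOpen_interior hΩint,
    MaxAffine.isOpen_admissibleHeights p _, MaxAffine.convex_admissibleHeights hΩconv.interior⟩

/-- The set `H` of height vectors for which every cell `W_i(h) ∩ Ω` has positive
volume is a nonempty open convex subset of `ℝᵏ`. -/
theorem admissible_heights_open_convex_nonempty (n k : ℕ)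
    (Ω : Set (EuclideanSpace ℝ (Fin n))) (hΩc : IsCompact Ω) (hΩconv : Convex ℝ Ω)
    (hΩint : (interior Ω).Nonempty)
    (p : Fin k → EuclideanSpace ℝ (Fin n)) (hp : Function.Injective p)
    (H : Set (Fin k → ℝ))
    (hH : H = {h | ∀ i, 0 < volume
      ({x : EuclideanSpace ℝ (Fin n) | ∀ j, ⟪x, p j⟫ + h j ≤ ⟪x, p i⟫ + h i} ∩ Ω)}) :
    H.Nonempty ∧ IsOpen H ∧ Convex ℝ H :=
  admissible_heights_open_convex_nonempty_general n k Ω hΩconv hΩint p hp H hH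
end

section
/- Let Ω ⊂ ℝⁿ be compact convex, σ: Ω → ℝ continuous and positive, and p₁,…,p_k distinct. For h in H = { h : vol(W_i(h)∩Ω) > 0 ∀i }, the function E(h) = ∫_Ω u_h(x) σ(x) dx is C¹ with ∂E/∂h_i = ∫_{W_i(h)∩Ω} σ(x) dx. -/
/-!
Off the finitely many hyperplanes `⟪x, p i - p j⟫ = h j - h i`, a null set, the maximum defining
`u_h(x)` is attained at a single index `i(x)`, and it stays the unique maximiser for all `h'`
near `h`. So for almost every `x` the map `h ↦ u_h(x)` is locally `h ↦ ⟪x, p i(x)⟫ + h i(x)`,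
with gradient `e_{i(x)}`, and it is `1`-Lipschitz everywhere. Differentiating under the integral
sign (dominated by `|σ|`) gives `∂E/∂h_i = ∫_{W_i(h) ∩ Ω} σ` at every `h`, and since the indicator
of `W_i(h)` is locally constant in `h` at almost every `x`, dominated convergence makes these
partial derivatives continuous.
-/

open MeasureTheory Filter Topology Function Finset
open scoped RealInnerProductSpace

theorem addHaar_setOf_inner_eq {E : Type*} [NormedAddCommGroup E] [InnerProductSpace ℝ E]
    [FiniteDimensional ℝ E] [MeasurableSpace E] [BorelSpace E] (μ : Measure E)
    [μ.IsAddHaarMeasure] {a : E} (ha : a ≠ 0) (c : ℝ) : μ {x | ⟪x, a⟫ = c} = 0 := by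
  let s : AffineSubspace ℝ E :=
    (AffineSubspace.mk' c ⊥).comap (innerSL ℝ a).toLinearMap.toAffineMap
  have hs : (s : Set E) = {x | ⟪x, a⟫ = c} := by
    ext x
    simp [s, AffineSubspace.mem_mk', real_inner_comm, sub_eq_zero]
  rw [← hs]
  refine Measure.addHaar_affineSubspace μ s fun htop => ha ?_
  have h0 : (0 : E) ∈ s := htop ▸ AffineSubspace.mem_top ℝ E 0
  have ha' : a ∈ s := htop ▸ AffineSubspace.mem_top ℝ E a
  rw [← SetLike.mem_coe, hs] at h0 ha'
  simp only [Set.mem_ofPred_eq, inner_zero_left] at h0 ha'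
  exact inner_self_eq_zero.1 (ha'.trans h0.symm)

theorem ae_injective_inner_add {E : Type*} [NormedAddCommGroup E] [InnerProductSpace ℝ E]
    [FiniteDimensional ℝ E] [MeasurableSpace E] [BorelSpace E] (μ : Measure E)
    [μ.IsAddHaarMeasure] {ι : Type*} [Countable ι] {p : ι → E} (hp : Injective p)
    (h : ι → ℝ) : ∀ᵐ x ∂μ, Injective fun i => ⟪x, p i⟫ + h i := by
  refine measure_mono_null (t := ⋃ i, ⋃ j, ⋃ (_ : i ≠ j), {x | ⟪x, p i - p j⟫ = h j - h i})
    ?_ (measure_iUnion_null fun i => measure_iUnion_null fun j => measure_iUnion_null fun hij =>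
      addHaar_setOf_inner_eq μ (sub_ne_zero.2 (hp.ne hij)) _)
  intro x hx
  obtain ⟨i, j, hij, hne⟩ := not_injective_iff.1 hx
  simp only [Set.mem_iUnion, Set.mem_ofPred_eq, inner_sub_right]
  exact ⟨i, j, hne, by linarith⟩

/-- `W_i(h)` of the paper when `a x j = ⟪x, p j⟫`. -/
def maxCell {ι X : Type*} (a : X → ι → ℝ) (h : ι → ℝ) (i : ι) : Set X :=
  {x | ∀ j, a x j + h j ≤ a x i + h i}

theorem measurableSet_maxCell {ι X : Type*} [Countable ι] [MeasurableSpace X] {a : X → ι → ℝ}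
    (ha : ∀ i, Measurable fun x => a x i) (h : ι → ℝ) (i : ι) :
    MeasurableSet (maxCell a h i) := by
  simp only [maxCell, Set.ofPred_forall]
  exact MeasurableSet.iInter fun j => measurableSet_le ((ha j).add_const _) ((ha i).add_const _)

section MaxPlus

variable {ι : Type*} [Fintype ι] [Nonempty ι]

theorem lipschitzWith_sup'_add (a : ι → ℝ) :
    LipschitzWith 1 fun h : ι → ℝ => univ.sup' univ_nonempty fun i => a i + h i :=
  LipschitzWith.of_le_add fun h h' => sup'_le _ _ fun i _ => by
    have hi : h i - h' i ≤ dist h h' :=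
      (le_abs_self _).trans ((Real.dist_eq _ _).symm.trans_le (dist_le_pi_dist h h' i))
    calc a i + h i ≤ a i + h' i + dist h h' := by linarith
      _ ≤ _ := by gcongr; exact le_sup' (fun i => a i + h' i) (mem_univ i)

theorem hasFDerivAt_sup'_add {a h₀ : ι → ℝ} {i : ι}
    (hi : ∀ᶠ h in 𝓝 h₀, ∀ l, a l + h l ≤ a i + h i) :
    HasFDerivAt (fun h : ι → ℝ => univ.sup' univ_nonempty fun l => a l + h l)
      (ContinuousLinearMap.proj (R := ℝ) i) h₀ :=
  ((hasFDerivAt_apply i h₀).const_add (a i)).congr_of_eventuallyEq <| hi.mono fun h hh =>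
    le_antisymm (sup'_le _ _ fun l _ => hh l) (le_sup' (fun l => a l + h l) (mem_univ i))

variable {X : Type*}

theorem exists_eventually_mem_maxCell_iff {a : X → ι → ℝ} {x : X} {h₀ : ι → ℝ}
    (hx : Injective fun i => a x i + h₀ i) :
    ∃ i, ∀ᶠ h in 𝓝 h₀, ∀ j, x ∈ maxCell a h j ↔ j = i := by
  obtain ⟨i, -, hi⟩ := exists_mem_eq_sup' univ_nonempty fun i => a x i + h₀ i
  have hlt : ∀ j ≠ i, a x j + h₀ j < a x i + h₀ i := fun j hj =>
    (hi ▸ le_sup' (fun l => a x l + h₀ l) (mem_univ j)).lt_of_ne (hx.ne hj)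
  have hev : ∀ᶠ h in 𝓝 h₀, ∀ j ≠ i, a x j + h j < a x i + h i := by
    refine eventually_all.2 fun j => ?_
    by_cases hj : j = i
    · exact Eventually.of_forall fun _ hji => absurd hj hji
    · exact ((continuous_const.add (continuous_apply j)).continuousAt.eventually_lt
        (continuous_const.add (continuous_apply i)).continuousAt (hlt j hj)).mono fun _ h _ => h
  refine ⟨i, hev.mono fun h hh j => ⟨fun hj => by_contra fun hji => (hj i).not_gt (hh j hji), ?_⟩⟩
  rintro rfl l
  rcases eq_or_ne l j with rfl | hl
  · exact le_rfl
  · exact (hh l hl).le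

end MaxPlus

section Integral

variable {ι X : Type*} [Fintype ι] [Nonempty ι] [MeasurableSpace X] {μ : Measure X}
  {a : X → ι → ℝ} {σ : X → ℝ}

theorem measurable_sup'_add (ha : ∀ i, Measurable fun x => a x i) (h : ι → ℝ) :
    Measurable fun x => univ.sup' univ_nonempty fun i => a x i + h i := by
  convert Finset.measurable_sup' univ_nonempty fun i _ => (ha i).add_const (h i) using 1
  ext x
  rw [Finset.sup'_apply]

theorem hasFDerivAt_integral_sup'_add_mul (ha : ∀ i, Measurable fun x => a x i)
    (hσ : Integrable σ μ) {h₀ : ι → ℝ}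
    (hint : Integrable (fun x => (univ.sup' univ_nonempty fun i => a x i + h₀ i) * σ x) μ)
    (hinj : ∀ᵐ x ∂μ, Injective fun i => a x i + h₀ i) :
    HasFDerivAt (fun h => ∫ x, (univ.sup' univ_nonempty fun i => a x i + h i) * σ x ∂μ)
      (∑ i, (∫ x in maxCell a h₀ i, σ x ∂μ) • ContinuousLinearMap.proj i : (ι → ℝ) →L[ℝ] ℝ)
      h₀ := by
  set F' : X → (ι → ℝ) →L[ℝ] ℝ := fun x =>
    ∑ i, (maxCell a h₀ i).indicator σ x • ContinuousLinearMap.proj (R := ℝ) i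
  have hF'_int : ∫ x, F' x ∂μ =
      ∑ i, (∫ x in maxCell a h₀ i, σ x ∂μ) • ContinuousLinearMap.proj (R := ℝ) i := by
    rw [integral_finsetSum _ fun i _ =>
      (hσ.indicator (measurableSet_maxCell ha h₀ i)).smul_const _]
    simp only [integral_smul_const, integral_indicator (measurableSet_maxCell ha h₀ _)]
  rw [← hF'_int]
  refine (hasFDerivAt_integral_of_dominated_loc_of_lip (bound := fun x => |σ x|) univ_mem
    (Eventually.of_forall fun h => (measurable_sup'_add ha h).aestronglyMeasurable.mul hσ.1)
    hint ?_ ?_ hσ.abs ?_).2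
  · exact Finset.aestronglyMeasurable_fun_sum _ fun i _ =>
      (hσ.1.indicator (measurableSet_maxCell ha h₀ i)).smul_const
        (ContinuousLinearMap.proj i : (ι → ℝ) →L[ℝ] ℝ)
  · refine Eventually.of_forall fun x => ?_
    have hK : Real.nnabs |σ x| = ‖σ x‖₊ := by ext; simp
    rw [hK]
    refine lipschitzOnWith_univ.2 ?_
    simpa only [Pi.mul_apply, smul_eq_mul, mul_one, mul_comm (σ x), Function.comp_def] using
      (lipschitzWith_smul (σ x)).comp (lipschitzWith_sup'_add (a x))
  · filter_upwards [hinj] with x hx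
    obtain ⟨i, hi⟩ := exists_eventually_mem_maxCell_iff hx
    have hF' : F' x = σ x • ContinuousLinearMap.proj (R := ℝ) i := by
      classical
      have hσx : ∀ j, (maxCell a h₀ j).indicator σ x = if j = i then σ x else 0 := fun j => by
        simp only [Set.indicator_apply, hi.self_of_nhds j]
      simp only [F', hσx, ite_smul, zero_smul, sum_ite_eq', mem_univ, if_true]
    rw [hF']
    exact (hasFDerivAt_sup'_add (hi.mono fun h hh => (hh i).2 rfl)).mul_const (σ x)

theorem continuousAt_setIntegral_maxCell (ha : ∀ i, Measurable fun x => a x i)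
    (hσ : Integrable σ μ) {h₀ : ι → ℝ} (hinj : ∀ᵐ x ∂μ, Injective fun i => a x i + h₀ i)
    (i : ι) : ContinuousAt (fun h => ∫ x in maxCell a h i, σ x ∂μ) h₀ := by
  simp_rw [← integral_indicator (measurableSet_maxCell ha _ i)]
  refine continuousAt_of_dominated (bound := fun x => ‖σ x‖)
    (Eventually.of_forall fun h => hσ.1.indicator (measurableSet_maxCell ha h i))
    (Eventually.of_forall fun h => Eventually.of_forall fun x => norm_indicator_le_norm_self σ x)
    hσ.norm ?_
  filter_upwards [hinj] with x hx
  obtain ⟨l, hl⟩ := exists_eventually_mem_maxCell_iff hx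
  refine (continuousAt_const (y := (maxCell a h₀ i).indicator σ x)).congr (hl.mono fun h hh => ?_)
  classical
  simp only [Set.indicator_apply, hh i, hl.self_of_nhds i]

end Integral

theorem energy_C1_gradient_general (n k : ℕ) [NeZero k]
    (Ω : Set (EuclideanSpace ℝ (Fin n))) (hΩc : IsCompact Ω)
    (σ : EuclideanSpace ℝ (Fin n) → ℝ) (hσ : ContinuousOn σ Ω)
    (p : Fin k → EuclideanSpace ℝ (Fin n)) (hp : Function.Injective p)
    (W : (Fin k → ℝ) → Fin k → Set (EuclideanSpace ℝ (Fin n)))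
    (hWdef : ∀ h i, W h i = {x | ∀ j, ⟪x, p j⟫ + h j ≤ ⟪x, p i⟫ + h i})
    (H : Set (Fin k → ℝ))
    (E : (Fin k → ℝ) → ℝ)
    (hE : ∀ h, E h = ∫ x in Ω,
      (Finset.univ.sup' Finset.univ_nonempty (fun i => ⟪x, p i⟫ + h i)) * σ x) :
    ContDiffOn ℝ 1 E H ∧
    ∀ h ∈ H, ∀ i, fderiv ℝ E h (Pi.single i 1) = ∫ x in (W h i ∩ Ω), σ x := by
  set a : EuclideanSpace ℝ (Fin n) → Fin k → ℝ := fun x i => ⟪x, p i⟫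
  have ha : ∀ i, Measurable fun x => a x i := fun i =>
    (continuous_id.inner continuous_const).measurable
  have hσ_int : IntegrableOn σ Ω := hσ.integrableOn_compact hΩc
  have hinj : ∀ h : Fin k → ℝ, ∀ᵐ x ∂volume.restrict Ω, Injective fun i => a x i + h i := fun h =>
    ae_restrict_of_ae (ae_injective_inner_add volume hp h)
  have hint : ∀ h : Fin k → ℝ, IntegrableOn
      (fun x => (univ.sup' univ_nonempty fun i => a x i + h i) * σ x) Ω := fun h =>
    ((Continuous.finset_sup'_apply _ fun i _ => (continuous_id.inner continuous_const).add
      continuous_const).continuousOn.mul hσ).integrableOn_compact hΩc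
  set g : Fin k → (Fin k → ℝ) → ℝ := fun i h => ∫ x in maxCell a h i, σ x ∂volume.restrict Ω
  have hE_deriv : ∀ h, HasFDerivAt E (∑ i, g i h • ContinuousLinearMap.proj i) h := fun h => by
    rw [funext hE]
    exact hasFDerivAt_integral_sup'_add_mul ha hσ_int (hint h) (hinj h)
  have hfderiv : fderiv ℝ E = fun h => ∑ i, g i h • ContinuousLinearMap.proj i :=
    funext fun h => (hE_deriv h).fderiv
  have hg : ∀ i, Continuous (g i) := fun i => continuous_iff_continuousAt.2 fun h =>
    continuousAt_setIntegral_maxCell ha hσ_int (hinj h) i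
  refine ⟨(contDiff_one_iff_fderiv.2 ⟨fun h => (hE_deriv h).differentiableAt, hfderiv ▸
    continuous_finsetSum _ fun i _ => (hg i).smul continuous_const⟩).contDiffOn, fun h _ i => ?_⟩
  rw [hWdef]
  change _ = ∫ x in maxCell a h i ∩ Ω, σ x
  rw [hfderiv, ← Measure.restrict_restrict (measurableSet_maxCell ha h i)]
  simp [g, Pi.single_apply]

/-- On the admissible set `H`, the energy `E(h) = ∫_Ω u_h σ` is `C¹` with
`∂E/∂h_i = ∫_{W_i(h) ∩ Ω} σ`. -/
theorem energy_C1_gradient (n k : ℕ) [NeZero k]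
    (Ω : Set (EuclideanSpace ℝ (Fin n))) (hΩc : IsCompact Ω) (hΩconv : Convex ℝ Ω)
    (σ : EuclideanSpace ℝ (Fin n) → ℝ) (hσ : ContinuousOn σ Ω)
    (hσpos : ∀ x ∈ Ω, 0 < σ x)
    (p : Fin k → EuclideanSpace ℝ (Fin n)) (hp : Function.Injective p)
    (W : (Fin k → ℝ) → Fin k → Set (EuclideanSpace ℝ (Fin n)))
    (hWdef : ∀ h i, W h i = {x | ∀ j, ⟪x, p j⟫ + h j ≤ ⟪x, p i⟫ + h i})
    (H : Set (Fin k → ℝ)) (hH : H = {h | ∀ i, 0 < volume (W h i ∩ Ω)})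
    (E : (Fin k → ℝ) → ℝ)
    (hE : ∀ h, E h = ∫ x in Ω,
      (Finset.univ.sup' Finset.univ_nonempty (fun i => ⟪x, p i⟫ + h i)) * σ x) :
    ContDiffOn ℝ 1 E H ∧
    ∀ h ∈ H, ∀ i, fderiv ℝ E h (Pi.single i 1) = ∫ x in (W h i ∩ Ω), σ x :=
  energy_C1_gradient_general n k Ω hΩc σ hσ p hp W hWdef H E hE
end

section
/- Let Ω ⊂ ℝⁿ be a compact convex domain with nonempty interior, p₁,…,p_k ∈ ℝⁿ distinct, σ: Ω → ℝ continuous and positive. If b, b' ∈ ℝᵏ both satisfy ∫_{W_i(·)∩Ω} σ dx = A_i for all i (for some fixed A_i > 0 with ∑A_i = ∫_Ω σ), then b − b' is a constant vector (c,…,c). -/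
/-!
Write `d = b - b'` and `u_h` for the upper envelope `max_j (⟪x, p j⟫ + h j)`. At an index `i`
minimising `d`, the cell of `b` is contained in the cell of `b'`; both carry the mass `A i` and
`σ > 0`, so they differ by a null set. Moreover `u_b - u_{b'} ≤ d i` on the `i`-th cell of `b` and
`u_b - u_{b'} ≥ d j` on the `j`-th cell of `b'`. If `d` is not constant, let `m < m'` be its two
smallest values: every point where `m < u_b - u_{b'} < m'` lies in a cell of `b'` at a minimising
index but not in the cell of `b` at that index. These points form an open set, and it is nonempty
by the intermediate value theorem on the connected interior of `Ω`, since `A > 0` forces the cells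
at the values `m` and `m'` to meet `Ω`. Being open and nonempty, it cannot be null.
-/

open MeasureTheory
open scoped RealInnerProductSpace

theorem Finite.exists_min_lt_of_ne_const {ι : Type*} [Finite ι] {d : ι → ℝ}
    (hd : ¬ ∃ c, ∀ i, d i = c) :
    ∃ i₀ j₁, d i₀ < d j₁ ∧ (∀ l, d i₀ ≤ d l) ∧ ∀ j, d j < d j₁ → d j = d i₀ := by
  have := Fintype.ofFinite ι
  push Not at hd
  obtain ⟨j, -⟩ := hd 0
  obtain ⟨i₀, -, hi₀⟩ := Finset.exists_min_image Finset.univ d ⟨j, Finset.mem_univ j⟩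
  obtain ⟨j₀, hj₀⟩ := hd (d i₀)
  have hT : (Finset.univ.filter fun j => d j ≠ d i₀).Nonempty := ⟨j₀, by simpa using hj₀⟩
  obtain ⟨j₁, hj₁T, hj₁⟩ := Finset.exists_min_image _ d hT
  have hj₁ne : d j₁ ≠ d i₀ := (Finset.mem_filter.1 hj₁T).2
  refine ⟨i₀, j₁, lt_of_le_of_ne (hi₀ j₁ (Finset.mem_univ _)) hj₁ne.symm,
    fun l => hi₀ l (Finset.mem_univ l), fun j hj => ?_⟩
  by_contra hne
  exact hj.not_ge (hj₁ j (by simpa using hne))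

theorem Convex.exists_mem_interior_eq {E : Type*} [NormedAddCommGroup E] [NormedSpace ℝ E]
    {s : Set E} (hs : Convex ℝ s) (hint : (interior s).Nonempty) {f : E → ℝ} (hf : Continuous f)
    {x y : E} (hx : x ∈ s) (hy : y ∈ s) {c : ℝ} (hc : c ∈ Set.Ioo (f x) (f y)) :
    ∃ z ∈ interior s, f z = c := by
  have hcl : s ⊆ closure (interior s) :=
    hs.closure_interior_eq_closure_of_nonempty_interior hint ▸ subset_closure
  obtain ⟨x', hx', hx'int⟩ := mem_closure_iff.1 (hcl hx) _ (isOpen_lt hf continuous_const) hc.1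
  obtain ⟨y', hy', hy'int⟩ := mem_closure_iff.1 (hcl hy) _ (isOpen_lt continuous_const hf) hc.2
  exact hs.interior.isPreconnected.intermediate_value hx'int hy'int hf.continuousOn
    ⟨hx'.le, hy'.le⟩

section SetIntegral

variable {X : Type*} [MeasurableSpace X] {μ : Measure X} {f : X → ℝ} {s t : Set X}

theorem nonempty_of_setIntegral_ne_zero (h : ∫ x in s, f x ∂μ ≠ 0) : s.Nonempty :=
  Set.nonempty_iff_ne_empty.2 fun he => h (he ▸ setIntegral_empty)

theorem measure_eq_zero_of_setIntegral_eq_zero (hs : MeasurableSet s) (hf : IntegrableOn f s μ)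
    (hpos : ∀ x ∈ s, 0 < f x) (hzero : ∫ x in s, f x ∂μ = 0) : μ s = 0 := by
  have hsupp : Function.support f ∩ s = s := Set.inter_eq_right.2 fun x hx => (hpos x hx).ne'
  rw [← hsupp]
  by_contra hne
  have := (setIntegral_pos_iff_support_of_nonneg_ae
    (ae_restrict_of_forall_mem hs fun x hx => (hpos x hx).le) hf).2 (pos_iff_ne_zero.2 hne)
  exact this.ne' hzero

theorem measure_sdiff_eq_zero_of_setIntegral_eq (hs : MeasurableSet s) (ht : MeasurableSet t)
    (hst : s ⊆ t) (hf : IntegrableOn f t μ) (hpos : ∀ x ∈ t, 0 < f x)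
    (heq : ∫ x in s, f x ∂μ = ∫ x in t, f x ∂μ) : μ (t \ s) = 0 :=
  measure_eq_zero_of_setIntegral_eq_zero (ht.diff hs) (hf.mono_set Set.sdiff_subset)
    (fun x hx => hpos x hx.1) (by rw [setIntegral_sdiff hs hf hst, heq, sub_self])

end SetIntegral

section PowerDiagram

variable {E ι : Type*} [NormedAddCommGroup E] [InnerProductSpace ℝ E]

def powerCell (p : ι → E) (h : ι → ℝ) (i : ι) : Set E :=
  {x | ∀ j, ⟪x, p j⟫ + h j ≤ ⟪x, p i⟫ + h i}

theorem isClosed_powerCell (p : ι → E) (h : ι → ℝ) (i : ι) : IsClosed (powerCell p h i) := by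
  simp only [powerCell, Set.ofPred_forall]
  exact isClosed_iInter fun j => isClosed_le (by fun_prop) (by fun_prop)

theorem powerCell_subset_powerCell {p : ι → E} {b b' : ι → ℝ} {i : ι}
    (hi : ∀ j, b i - b' i ≤ b j - b' j) : powerCell p b i ⊆ powerCell p b' i :=
  fun x hx j => by linarith [hx j, hi j]

variable [Fintype ι] [Nonempty ι]

def upperEnvelope (p : ι → E) (h : ι → ℝ) (x : E) : ℝ :=
  Finset.univ.sup' Finset.univ_nonempty fun j => ⟪x, p j⟫ + h j

theorem continuous_upperEnvelope (p : ι → E) (h : ι → ℝ) : Continuous (upperEnvelope p h) :=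
  Continuous.finset_sup'_apply _ fun j _ => by fun_prop

theorem le_upperEnvelope (p : ι → E) (h : ι → ℝ) (x : E) (j : ι) :
    ⟪x, p j⟫ + h j ≤ upperEnvelope p h x :=
  Finset.le_sup' (fun j => ⟪x, p j⟫ + h j) (Finset.mem_univ j)

theorem upperEnvelope_eq_of_mem_powerCell {p : ι → E} {h : ι → ℝ} {i : ι} {x : E}
    (hx : x ∈ powerCell p h i) : upperEnvelope p h x = ⟪x, p i⟫ + h i :=
  le_antisymm (Finset.sup'_le _ _ fun j _ => hx j) (le_upperEnvelope p h x i)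

theorem exists_mem_powerCell (p : ι → E) (h : ι → ℝ) (x : E) : ∃ i, x ∈ powerCell p h i := by
  obtain ⟨i, -, hi⟩ := Finset.exists_mem_eq_sup' Finset.univ_nonempty fun j => ⟪x, p j⟫ + h j
  exact ⟨i, fun j => hi ▸ le_upperEnvelope p h x j⟩

theorem upperEnvelope_sub_le_of_mem_powerCell {p : ι → E} {b b' : ι → ℝ} {i : ι} {x : E}
    (hx : x ∈ powerCell p b i) : upperEnvelope p b x - upperEnvelope p b' x ≤ b i - b' i := by
  rw [upperEnvelope_eq_of_mem_powerCell hx]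
  linarith [le_upperEnvelope p b' x i]

theorem le_upperEnvelope_sub_of_mem_powerCell {p : ι → E} {b b' : ι → ℝ} {j : ι} {x : E}
    (hx : x ∈ powerCell p b' j) : b j - b' j ≤ upperEnvelope p b x - upperEnvelope p b' x := by
  rw [upperEnvelope_eq_of_mem_powerCell hx]
  linarith [le_upperEnvelope p b x j]

theorem exists_mem_powerCell_sdiff {p : ι → E} {b b' : ι → ℝ} {i₀ j₁ : ι}
    (hgap : ∀ j, b j - b' j < b j₁ - b' j₁ → b j - b' j = b i₀ - b' i₀) {x : E}
    (hx : upperEnvelope p b x - upperEnvelope p b' x ∈ Set.Ioo (b i₀ - b' i₀) (b j₁ - b' j₁)) :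
    ∃ j, b j - b' j = b i₀ - b' i₀ ∧ x ∈ powerCell p b' j \ powerCell p b j := by
  obtain ⟨j, hj⟩ := exists_mem_powerCell p b' x
  have hjmin := hgap j ((le_upperEnvelope_sub_of_mem_powerCell hj).trans_lt hx.2)
  refine ⟨j, hjmin, hj, fun hj' => ?_⟩
  linarith [upperEnvelope_sub_le_of_mem_powerCell (b' := b') hj', hx.1]

end PowerDiagram

theorem measure_powerCell_inter_sdiff_eq_zero {E ι : Type*} [NormedAddCommGroup E]
    [InnerProductSpace ℝ E] [MeasurableSpace E] [BorelSpace E] {μ : Measure E}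
    {Ω : Set E} (hΩ : IsClosed Ω) {σ : E → ℝ} (hσ : IntegrableOn σ Ω μ)
    (hσpos : ∀ x ∈ Ω, 0 < σ x) {p : ι → E} {b b' : ι → ℝ} {i : ι}
    (hi : ∀ j, b i - b' i ≤ b j - b' j)
    (heq : ∫ x in powerCell p b i ∩ Ω, σ x ∂μ = ∫ x in powerCell p b' i ∩ Ω, σ x ∂μ) :
    μ ((powerCell p b' i ∩ Ω) \ (powerCell p b i ∩ Ω)) = 0 := by
  have hmeas : ∀ h, MeasurableSet (powerCell p h i ∩ Ω) := fun h =>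
    (isClosed_powerCell p h i).measurableSet.inter hΩ.measurableSet
  exact measure_sdiff_eq_zero_of_setIntegral_eq (hmeas b) (hmeas b')
    (Set.inter_subset_inter_left _ (powerCell_subset_powerCell hi))
    (hσ.mono_set Set.inter_subset_right) (fun x hx => hσpos x hx.2) heq

theorem alexandrov_uniqueness_general (n k : ℕ)
    (Ω : Set (EuclideanSpace ℝ (Fin n))) (hΩc : IsCompact Ω) (hΩconv : Convex ℝ Ω)
    (hΩint : (interior Ω).Nonempty)
    (p : Fin k → EuclideanSpace ℝ (Fin n))
    (σ : EuclideanSpace ℝ (Fin n) → ℝ) (hσ : ContinuousOn σ Ω)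
    (hσpos : ∀ x ∈ Ω, 0 < σ x)
    (W : (Fin k → ℝ) → Fin k → Set (EuclideanSpace ℝ (Fin n)))
    (hWdef : ∀ h i, W h i = {x | ∀ j, ⟪x, p j⟫ + h j ≤ ⟪x, p i⟫ + h i})
    (A : Fin k → ℝ) (hA : ∀ i, 0 < A i)
    (b b' : Fin k → ℝ)
    (hb : ∀ i, (∫ x in (W b i ∩ Ω), σ x) = A i)
    (hb' : ∀ i, (∫ x in (W b' i ∩ Ω), σ x) = A i) :
    ∃ c : ℝ, ∀ i, b i - b' i = c := by
  obtain rfl : W = powerCell p := funext₂ hWdef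
  by_contra hne
  obtain ⟨i₀, j₁, hlt, hmin, hgap⟩ := Finite.exists_min_lt_of_ne_const hne
  have : Nonempty (Fin k) := ⟨i₀⟩
  obtain ⟨x₀, hx₀, hx₀Ω⟩ := nonempty_of_setIntegral_ne_zero ((hb i₀).trans_ne (hA i₀).ne')
  obtain ⟨y₀, hy₀, hy₀Ω⟩ := nonempty_of_setIntegral_ne_zero ((hb' j₁).trans_ne (hA j₁).ne')
  set g := fun x => upperEnvelope p b x - upperEnvelope p b' x
  have hg : Continuous g := (continuous_upperEnvelope p b).sub (continuous_upperEnvelope p b')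
  obtain ⟨z, hz, hgz⟩ := hΩconv.exists_mem_interior_eq hΩint hg hx₀Ω hy₀Ω
    (c := (b i₀ - b' i₀ + (b j₁ - b' j₁)) / 2)
    ⟨(upperEnvelope_sub_le_of_mem_powerCell hx₀).trans_lt (by linarith),
      (le_upperEnvelope_sub_of_mem_powerCell hy₀).trans_lt' (by linarith)⟩
  set O := interior Ω ∩ g ⁻¹' Set.Ioo (b i₀ - b' i₀) (b j₁ - b' j₁)
  have hO_pos : 0 < volume O :=
    (isOpen_interior.inter (isOpen_Ioo.preimage hg)).measure_pos volume
      ⟨z, hz, by simp only [Set.mem_preimage, hgz, Set.mem_Ioo]; constructor <;> linarith⟩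
  have hO_sub : O ⊆ ⋃ j ∈ {j | b j - b' j = b i₀ - b' i₀},
      (powerCell p b' j ∩ Ω) \ (powerCell p b j ∩ Ω) := by
    rintro x ⟨hxint, hx⟩
    obtain ⟨j, hj, hxj, hxj'⟩ := exists_mem_powerCell_sdiff hgap hx
    exact Set.mem_biUnion hj ⟨⟨hxj, interior_subset hxint⟩, fun h => hxj' h.1⟩
  refine hO_pos.ne' (measure_mono_null hO_sub ((measure_biUnion_null_iff (Set.to_countable _)).2
    fun j hj => ?_))
  exact measure_powerCell_inter_sdiff_eq_zero hΩc.isClosed (hσ.integrableOn_compact hΩc) hσpos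
    (fun l => hj ▸ hmin l) ((hb j).trans (hb' j).symm)

/-- Uniqueness in Alexandrov's theorem: if two height vectors produce the same cell
masses `A_i`, they differ by a constant vector. -/
theorem alexandrov_uniqueness (n k : ℕ)
    (Ω : Set (EuclideanSpace ℝ (Fin n))) (hΩc : IsCompact Ω) (hΩconv : Convex ℝ Ω)
    (hΩint : (interior Ω).Nonempty)
    (p : Fin k → EuclideanSpace ℝ (Fin n)) (hp : Function.Injective p)
    (σ : EuclideanSpace ℝ (Fin n) → ℝ) (hσ : ContinuousOn σ Ω)
    (hσpos : ∀ x ∈ Ω, 0 < σ x)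
    (W : (Fin k → ℝ) → Fin k → Set (EuclideanSpace ℝ (Fin n)))
    (hWdef : ∀ h i, W h i = {x | ∀ j, ⟪x, p j⟫ + h j ≤ ⟪x, p i⟫ + h i})
    (A : Fin k → ℝ) (hA : ∀ i, 0 < A i)
    (hAsum : ∑ i, A i = ∫ x in Ω, σ x)
    (b b' : Fin k → ℝ)
    (hb : ∀ i, (∫ x in (W b i ∩ Ω), σ x) = A i)
    (hb' : ∀ i, (∫ x in (W b' i ∩ Ω), σ x) = A i) :
    ∃ c : ℝ, ∀ i, b i - b' i = c :=
  alexandrov_uniqueness_general n k Ω hΩc hΩconv hΩint p σ hσ hσpos W hWdef A hA b b' hb hb'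
end

section
/- Let Ω ⊂ ℝⁿ be a compact convex domain, σ: Ω → ℝ positive continuous, p₁,…,p_k ∈ ℝⁿ distinct, and A₁,…,A_k > 0 with ∑ A_i = ∫_Ω σ(x) dx. Then there exists b ∈ ℝᵏ such that for u_b(x) = max_i(x·p_i + b_i), the cells W_i(b) = { x : ∇u_b(x) = p_i } satisfy ∫_{W_i(b)∩Ω} σ(x) dx = A_i for all i. -/
/-!
The heights are a minimiser of the functional `Φ(b) = ∫_Ω u_b σ - ∑ᵢ Aᵢ bᵢ`, where
`u_b = maxᵢ (⟪·, pᵢ⟫ + bᵢ)`. Since `∑ᵢ Aᵢ = ∫_Ω σ`, `Φ` is unchanged when the same constant is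
added to all heights, and on heights with `max b = 0` it is coercive because every `Aᵢ > 0`;
being Lipschitz, it attains its minimum. Raising `b_j` by `t > 0` raises `u_b` by at most `t`,
and only on the cell `W_j(b + t e_j)`; lowering it by `t` lowers `u_b` by exactly `t` on
`W_j(b - t e_j)`. At a minimiser this gives `A_j ≤ ∫_{W_j(b + t e_j)} σ` and
`∫_{W_j(b - t e_j)} σ ≤ A_j`, and letting `t → 0` squeezes `A_j` between the masses of the open
cell and of the closed cell `W_j(b)`. The two differ by pieces of the hyperplanes
`⟪x, p_i - p_j⟫ = b_j - b_i`, which are Lebesgue null because the `p_i` are distinct.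
-/

open MeasureTheory Filter Set
open scoped RealInnerProductSpace Topology

namespace Alexandrov

variable {X ι : Type*}

section MeasureLimits

variable [MeasurableSpace X] {μ : Measure X} [IsFiniteMeasure μ] {s : ℕ → Set X} {a : ℝ}

lemma le_measureReal_iInter_of_antitone (hs : ∀ m, MeasurableSet (s m)) (hanti : Antitone s)
    (h : ∀ m, a ≤ μ.real (s m)) : a ≤ μ.real (⋂ m, s m) :=
  ge_of_tendsto' ((ENNReal.tendsto_toReal (measure_ne_top μ _)).comp
    (tendsto_measure_iInter_atTop (fun m => (hs m).nullMeasurableSet) hanti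
      ⟨0, measure_ne_top μ _⟩)) h

lemma measureReal_iUnion_le_of_monotone (hmono : Monotone s) (h : ∀ m, μ.real (s m) ≤ a) :
    μ.real (⋃ m, s m) ≤ a :=
  le_of_tendsto' ((ENNReal.tendsto_toReal (measure_ne_top μ _)).comp
    (tendsto_measure_iUnion_atTop hmono)) h

end MeasureLimits

lemma measureReal_withDensity_ofReal [MeasurableSpace X] {ν : Measure X} {g : X → ℝ}
    (hg : Integrable g ν) (hg0 : 0 ≤ᵐ[ν] g) {s : Set X} (hs : MeasurableSet s) :
    (ν.withDensity fun x => ENNReal.ofReal (g x)).real s = ∫ x in s, g x ∂ν := by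
  rw [measureReal_def, withDensity_apply _ hs,
    ← ofReal_integral_eq_lintegral_ofReal hg.restrict (ae_restrict_of_ae hg0),
    ENNReal.toReal_ofReal (integral_nonneg_of_ae (ae_restrict_of_ae hg0))]

section Hyperplanes

variable {E : Type*} [NormedAddCommGroup E] [InnerProductSpace ℝ E] [FiniteDimensional ℝ E]
  [MeasurableSpace E] [BorelSpace E] (μ : Measure E) [μ.IsAddHaarMeasure]

lemma addHaar_setOf_inner_eq {v : E} (hv : v ≠ 0) (c : ℝ) : μ {x | ⟪x, v⟫ = c} = 0 := by
  have hker : LinearMap.ker (innerₛₗ ℝ v) ≠ ⊤ := fun h =>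
    hv (inner_self_eq_zero.1 (LinearMap.mem_ker.1 (h ▸ Submodule.mem_top :
      v ∈ LinearMap.ker (innerₛₗ ℝ v))))
  have hset : {x | ⟪x, v⟫ = c} = (· + -((c / ‖v‖ ^ 2) • v)) ⁻¹' LinearMap.ker (innerₛₗ ℝ v) := by
    ext x
    simp only [mem_preimage, SetLike.mem_coe, LinearMap.mem_ker, innerₛₗ_apply_apply,
      mem_ofPred_eq, ← sub_eq_add_neg, inner_sub_right, real_inner_smul_right,
      real_inner_self_eq_norm_sq, real_inner_comm x]
    rw [div_mul_cancel₀ _ (pow_ne_zero 2 (norm_ne_zero_iff.2 hv)), sub_eq_zero]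
  rw [hset, measure_preimage_add_right]
  exact Measure.addHaar_submodule μ _ hker

lemma addHaar_setOf_inner_add_eq_inner_add {v w : E} (hvw : v ≠ w) (a c : ℝ) :
    μ {x | ⟪x, v⟫ + a = ⟪x, w⟫ + c} = 0 := by
  convert addHaar_setOf_inner_eq μ (sub_ne_zero.2 hvw) (c - a) using 2
  ext x
  simp only [mem_ofPred_eq, inner_sub_right]
  constructor <;> intro h <;> linarith

end Hyperplanes

section Cells

variable {f : ι → X → ℝ} {b : ι → ℝ} {j : ι} {x : X}

def cell (f : ι → X → ℝ) (b : ι → ℝ) (j : ι) : Set X :=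
  {x | ∀ i, f i x + b i ≤ f j x + b j}

def strictCell (f : ι → X → ℝ) (b : ι → ℝ) (j : ι) : Set X :=
  {x | ∀ i ≠ j, f i x + b i < f j x + b j}

lemma strictCell_subset_cell : strictCell f b j ⊆ cell f b j := fun x hx i => by
  rcases eq_or_ne i j with rfl | hij
  · exact le_rfl
  · exact (hx i hij).le

lemma measurableSet_cell [MeasurableSpace X] [Countable ι] (hf : ∀ i, Measurable (f i))
    (b : ι → ℝ) (j : ι) : MeasurableSet (cell f b j) := by
  simp only [cell, ofPred_forall]
  exact .iInter fun i => measurableSet_le ((hf i).add_const _) ((hf j).add_const _)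

lemma mem_cell_add_single [DecidableEq ι] {t : ℝ} :
    x ∈ cell f (b + Pi.single j t) j ↔ ∀ i ≠ j, f i x + b i ≤ f j x + (b j + t) := by
  simp only [cell, mem_ofPred_eq, Pi.add_apply, Pi.single_eq_same]
  refine ⟨fun h i hij => by simpa [Pi.single_eq_of_ne hij] using h i, fun h i => ?_⟩
  rcases eq_or_ne i j with rfl | hij
  · simp
  · simpa [Pi.single_eq_of_ne hij] using h i hij

end Cells

section Envelope

variable [Fintype ι] [Nonempty ι] {f : ι → X → ℝ} {b b' : ι → ℝ} {j : ι} {x : X}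

def envelope (f : ι → X → ℝ) (b : ι → ℝ) (x : X) : ℝ :=
  Finset.univ.sup' Finset.univ_nonempty fun i => f i x + b i

lemma le_envelope (f : ι → X → ℝ) (b : ι → ℝ) (x : X) (i : ι) : f i x + b i ≤ envelope f b x :=
  Finset.le_sup' (fun i => f i x + b i) (Finset.mem_univ i)

lemma envelope_le {c : ℝ} (h : ∀ i, f i x + b i ≤ c) : envelope f b x ≤ c :=
  Finset.sup'_le _ _ fun i _ => h i

lemma envelope_eq_of_mem_cell (hx : x ∈ cell f b j) : envelope f b x = f j x + b j :=
  (envelope_le hx).antisymm (le_envelope f b x j)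

lemma envelope_mono (h : b ≤ b') : envelope f b x ≤ envelope f b' x :=
  envelope_le fun i => by linarith [h i, le_envelope f b' x i]

lemma envelope_add_const (c : ℝ) : envelope f (b + fun _ => c) x = envelope f b x + c := by
  refine le_antisymm (envelope_le fun i => ?_) ?_
  · simp only [Pi.add_apply]
    linarith [le_envelope f b x i]
  · rw [← le_sub_iff_add_le]
    refine envelope_le fun i => ?_
    have := le_envelope f (b + fun _ => c) x i
    simp only [Pi.add_apply] at this
    linarith

lemma abs_envelope_sub_envelope_le : |envelope f b x - envelope f b' x| ≤ dist b b' := by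
  have key : ∀ b b' : ι → ℝ, envelope f b x ≤ envelope f b' x + dist b b' := fun b b' =>
    envelope_le fun i => by
      have : b i - b' i ≤ dist b b' :=
        (le_abs_self _).trans ((Real.dist_eq _ _).symm.le.trans (dist_le_pi_dist b b' i))
      linarith [le_envelope f b' x i]
  rw [abs_sub_le_iff]
  constructor
  · linarith [key b b']
  · linarith [key b' b, dist_comm b b']

lemma envelope_add_single_le [DecidableEq ι] {t : ℝ} :
    envelope f (b + Pi.single j t) x ≤
      envelope f b x + (cell f (b + Pi.single j t) j).indicator (fun _ => t) x := by
  by_cases hx : x ∈ cell f (b + Pi.single j t) j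
  · rw [indicator_of_mem hx, envelope_eq_of_mem_cell hx, Pi.add_apply, Pi.single_eq_same]
    linarith [le_envelope f b x j]
  · rw [indicator_of_notMem hx, add_zero]
    obtain ⟨i, hij, hi⟩ : ∃ i ≠ j, f j x + (b j + t) < f i x + b i := by
      simpa [mem_cell_add_single] using hx
    refine envelope_le fun l => ?_
    rcases eq_or_ne l j with rfl | hlj
    · simp only [Pi.add_apply, Pi.single_eq_same]
      linarith [le_envelope f b x i]
    · simpa [Pi.single_eq_of_ne hlj] using le_envelope f b x l

lemma envelope_add_indicator_cell_le [DecidableEq ι] {t : ℝ} (ht : 0 ≤ t) :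
    envelope f b x + (cell f b j).indicator (fun _ => t) x ≤ envelope f (b + Pi.single j t) x := by
  by_cases hx : x ∈ cell f b j
  · have := le_envelope f (b + Pi.single j t) x j
    rw [Pi.add_apply, Pi.single_eq_same] at this
    rw [indicator_of_mem hx, envelope_eq_of_mem_cell hx]
    linarith
  · rw [indicator_of_notMem hx, add_zero]
    exact envelope_mono (le_add_of_nonneg_right (Pi.single_nonneg.2 ht))

end Envelope

section Energy

variable [MeasurableSpace X] [Fintype ι] [Nonempty ι] {μ : Measure X} [IsFiniteMeasure μ]
  {f : ι → X → ℝ} {A b : ι → ℝ} {j : ι}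

noncomputable def energy (μ : Measure X) (f : ι → X → ℝ) (A b : ι → ℝ) : ℝ :=
  ∫ x, envelope f b x ∂μ - ∑ i, A i * b i

lemma integrable_envelope (hf : ∀ i, Integrable (f i) μ) (b : ι → ℝ) :
    Integrable (envelope f b) μ := by
  have : envelope f b = Finset.univ.sup' Finset.univ_nonempty fun i => f i + fun _ => b i :=
    funext fun x => by rw [Finset.sup'_apply]; rfl
  rw [this]
  exact Finset.sup'_induction (p := fun g => Integrable g μ) _ _ (fun _ h₁ _ h₂ => h₁.sup h₂)
    fun i _ => (hf i).add (integrable_const _)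

lemma continuous_energy (hf : ∀ i, Integrable (f i) μ) (A : ι → ℝ) :
    Continuous (energy μ f A) := by
  have hlip : LipschitzWith (μ univ).toNNReal fun b => ∫ x, envelope f b x ∂μ := by
    refine .of_dist_le_mul fun b b' => ?_
    rw [Real.dist_eq, ← integral_sub (integrable_envelope hf b) (integrable_envelope hf b'),
      ENNReal.coe_toNNReal_eq_toReal, mul_comm]
    exact norm_integral_le_of_norm_le_const
      (.of_forall fun x => (Real.norm_eq_abs _).trans_le abs_envelope_sub_envelope_le)
  exact hlip.continuous.sub (continuous_finsetSum _ fun i _ => continuous_const.mul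
    (continuous_apply i))

lemma energy_add_const (hf : ∀ i, Integrable (f i) μ) (hA : ∑ i, A i = μ.real univ)
    (b : ι → ℝ) (c : ℝ) : energy μ f A (b + fun _ => c) = energy μ f A b := by
  simp only [energy, envelope_add_const, Pi.add_apply, mul_add, Finset.sum_add_distrib,
    ← Finset.sum_mul, hA]
  rw [integral_add (integrable_envelope hf b) (integrable_const c), integral_const, smul_eq_mul]
  ring

lemma neg_mul_le_energy_sub (hf : ∀ i, Integrable (f i) μ) (hA : ∀ i, 0 ≤ A i) {i₀ : ι}
    (hb : b ≤ 0) (hbi₀ : b i₀ = 0) (j : ι) :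
    A j * -b j ≤ energy μ f A b - ∫ x, f i₀ x ∂μ := by
  have hint : ∫ x, f i₀ x ∂μ ≤ ∫ x, envelope f b x ∂μ :=
    integral_mono (hf i₀) (integrable_envelope hf b) fun x => by
      simpa [hbi₀] using le_envelope f b x i₀
  have hsum : A j * -b j ≤ ∑ i, A i * -b i :=
    Finset.single_le_sum (f := fun i => A i * -b i)
      (fun i _ => mul_nonneg (hA i) (neg_nonneg.2 (hb i))) (Finset.mem_univ j)
  simp only [mul_neg, Finset.sum_neg_distrib] at hsum
  unfold energy
  linarith

theorem exists_forall_energy_le (hf : ∀ i, Integrable (f i) μ) (hA : ∀ i, 0 < A i)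
    (hAsum : ∑ i, A i = μ.real univ) : ∃ b, ∀ c, energy μ f A b ≤ energy μ f A c := by
  obtain ⟨R, hR⟩ := Finite.exists_le fun q : ι × ι =>
    (energy μ f A 0 - ∫ x, f q.1 x ∂μ) / A q.2
  have hK0 : (0 : ι → ℝ) ∈ Icc (fun _ : ι => -max R 0) 0 :=
    ⟨fun _ => neg_nonpos.2 (le_max_right R 0), le_rfl⟩
  obtain ⟨b, hbK, hbmin⟩ :=
    isCompact_Icc.exists_isMinOn ⟨0, hK0⟩ (continuous_energy hf A).continuousOn
  refine ⟨b, fun c => ?_⟩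
  obtain ⟨i₀, hi₀⟩ := Finite.exists_max c
  rw [← energy_add_const hf hAsum c (-c i₀)]
  set c' := c + fun _ => -c i₀
  by_cases hc' : energy μ f A c' ≤ energy μ f A 0
  · refine hbmin ⟨fun j => ?_, fun j => by simpa [c', sub_nonpos] using hi₀ j⟩
    have hcoer := neg_mul_le_energy_sub hf (fun i => (hA i).le) (b := c') (i₀ := i₀)
      (fun i => by simpa [c', sub_nonpos] using hi₀ i) (by simp [c']) j
    have : -c' j ≤ (energy μ f A 0 - ∫ x, f i₀ x ∂μ) / A j := by
      rw [le_div_iff₀ (hA j)]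
      linarith
    linarith [hR (i₀, j), le_max_left R 0]
  · exact (hbmin hK0).trans (not_le.1 hc').le

end Energy

section Optimality

variable [MeasurableSpace X] [Fintype ι] [Nonempty ι] [DecidableEq ι] {μ : Measure X}
  [IsFiniteMeasure μ] {f : ι → X → ℝ} {A b : ι → ℝ} {j : ι} {t : ℝ}

lemma energy_add_single_sub (μ : Measure X) (f : ι → X → ℝ) (A b : ι → ℝ) (j : ι) (t : ℝ) :
    energy μ f A (b + Pi.single j t) - energy μ f A b =
      ∫ x, envelope f (b + Pi.single j t) x ∂μ - ∫ x, envelope f b x ∂μ - A j * t := by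
  simp only [energy, Pi.add_apply, mul_add, Finset.sum_add_distrib, Pi.single_apply, mul_ite,
    mul_zero, Finset.sum_ite_eq', Finset.mem_univ, if_true]
  ring

lemma integral_envelope_add_single_sub_le (hfm : ∀ i, Measurable (f i))
    (hf : ∀ i, Integrable (f i) μ) :
    ∫ x, envelope f (b + Pi.single j t) x ∂μ - ∫ x, envelope f b x ∂μ ≤
      μ.real (cell f (b + Pi.single j t) j) * t := by
  have hcell := measurableSet_cell hfm (b + Pi.single j t) j
  have := integral_mono (integrable_envelope hf _)
    ((integrable_envelope hf b).add ((integrable_const t).indicator hcell))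
    fun x => envelope_add_single_le (j := j)
  rw [integral_add' (integrable_envelope hf b) ((integrable_const t).indicator hcell),
    integral_indicator_const _ hcell, smul_eq_mul] at this
  linarith

lemma measureReal_cell_mul_le_integral_envelope_add_single_sub (hfm : ∀ i, Measurable (f i))
    (hf : ∀ i, Integrable (f i) μ) (ht : 0 ≤ t) :
    μ.real (cell f b j) * t ≤
      ∫ x, envelope f (b + Pi.single j t) x ∂μ - ∫ x, envelope f b x ∂μ := by
  have hcell := measurableSet_cell hfm b j
  have := integral_mono ((integrable_envelope hf b).add ((integrable_const t).indicator hcell))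
    (integrable_envelope hf _) fun x => envelope_add_indicator_cell_le ht
  rw [integral_add' (integrable_envelope hf b) ((integrable_const t).indicator hcell),
    integral_indicator_const _ hcell, smul_eq_mul] at this
  linarith

lemma le_measureReal_cell_add_single (hfm : ∀ i, Measurable (f i))
    (hf : ∀ i, Integrable (f i) μ) (hmin : ∀ c, energy μ f A b ≤ energy μ f A c) (ht : 0 < t) :
    A j ≤ μ.real (cell f (b + Pi.single j t) j) := by
  have := energy_add_single_sub μ f A b j t
  have := integral_envelope_add_single_sub_le (b := b) (j := j) (t := t) hfm hf
  have := hmin (b + Pi.single j t)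
  exact le_of_mul_le_mul_right (by linarith) ht

lemma measureReal_cell_sub_single_le (hfm : ∀ i, Measurable (f i))
    (hf : ∀ i, Integrable (f i) μ) (hmin : ∀ c, energy μ f A b ≤ energy μ f A c) (ht : 0 < t) :
    μ.real (cell f (b - Pi.single j t) j) ≤ A j := by
  have := energy_add_single_sub μ f A (b - Pi.single j t) j t
  have := measureReal_cell_mul_le_integral_envelope_add_single_sub
    (b := b - Pi.single j t) (j := j) hfm hf ht.le
  have := hmin (b - Pi.single j t)
  rw [sub_add_cancel] at *
  exact le_of_mul_le_mul_right (by linarith) ht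

lemma le_measureReal_cell_of_forall_le_energy (hfm : ∀ i, Measurable (f i))
    (hf : ∀ i, Integrable (f i) μ) (hmin : ∀ c, energy μ f A b ≤ energy μ f A c) (j : ι) :
    A j ≤ μ.real (cell f b j) := by
  set t : ℕ → ℝ := fun m => 1 / (m + 1)
  have ht : ∀ m, 0 < t m := fun m => by positivity
  have hanti : Antitone fun m => cell f (b + Pi.single j (t m)) j := fun m m' hmm' x hx => by
    have : t m' ≤ t m := Nat.one_div_le_one_div hmm'
    rw [mem_cell_add_single] at hx ⊢
    exact fun i hij => (hx i hij).trans (by linarith)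
  refine (le_measureReal_iInter_of_antitone (fun m => measurableSet_cell hfm _ j) hanti
    fun m => le_measureReal_cell_add_single hfm hf hmin (ht m)).trans
    (measureReal_mono fun x hx i => ?_)
  rcases eq_or_ne i j with rfl | hij
  · exact le_rfl
  have hlim : Tendsto (fun m => f j x + (b j + t m)) atTop (𝓝 (f j x + b j)) := by
    have := tendsto_one_div_add_atTop_nhds_zero_nat.const_add (b j) |>.const_add (f j x)
    rwa [add_zero] at this
  exact ge_of_tendsto' hlim fun m => mem_cell_add_single.1 (mem_iInter.1 hx m) i hij

lemma measureReal_strictCell_le_of_forall_le_energy (hfm : ∀ i, Measurable (f i))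
    (hf : ∀ i, Integrable (f i) μ) (hmin : ∀ c, energy μ f A b ≤ energy μ f A c) (j : ι) :
    μ.real (strictCell f b j) ≤ A j := by
  set t : ℕ → ℝ := fun m => 1 / (m + 1)
  have ht : ∀ m, 0 < t m := fun m => by positivity
  have hmem : ∀ m x, x ∈ cell f (b - Pi.single j (t m)) j ↔
      ∀ i ≠ j, f i x + b i ≤ f j x + (b j + -t m) := fun m x => by
    rw [sub_eq_add_neg, ← Pi.single_neg]
    exact mem_cell_add_single
  have hmono : Monotone fun m => cell f (b - Pi.single j (t m)) j := fun m m' hmm' x hx => by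
    have : t m' ≤ t m := Nat.one_div_le_one_div hmm'
    rw [hmem] at hx ⊢
    exact fun i hij => (hx i hij).trans (by linarith)
  refine (measureReal_mono fun x hx => ?_).trans (measureReal_iUnion_le_of_monotone hmono
    fun m => measureReal_cell_sub_single_le hfm hf hmin (ht m))
  have hev : ∀ᶠ m in atTop, ∀ i ≠ j, f i x + b i ≤ f j x + (b j + -t m) := by
    refine eventually_all.2 fun i => ?_
    rcases eq_or_ne i j with rfl | hij
    · exact .of_forall fun _ h => absurd rfl h
    have hgap : 0 < f j x + b j - (f i x + b i) := sub_pos.2 (hx i hij)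
    exact (tendsto_one_div_add_atTop_nhds_zero_nat.eventually (gt_mem_nhds hgap)).mono
      fun m hm _ => by linarith
  obtain ⟨m, hm⟩ := hev.exists
  exact mem_iUnion.2 ⟨m, (hmem m x).2 hm⟩

end Optimality

theorem exists_measureReal_cell_eq [MeasurableSpace X] [Fintype ι] [Nonempty ι]
    {μ : Measure X} [IsFiniteMeasure μ] {f : ι → X → ℝ} {A : ι → ℝ}
    (hfm : ∀ i, Measurable (f i)) (hf : ∀ i, Integrable (f i) μ) (hA : ∀ i, 0 < A i)
    (hAsum : ∑ i, A i = μ.real univ)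
    (hties : ∀ (b : ι → ℝ) (i j : ι), i ≠ j → μ {x | f i x + b i = f j x + b j} = 0) :
    ∃ b, ∀ j, μ.real (cell f b j) = A j := by
  classical
  obtain ⟨b, hmin⟩ := exists_forall_energy_le hf hA hAsum
  refine ⟨b, fun j => le_antisymm ?_ (le_measureReal_cell_of_forall_le_energy hfm hf hmin j)⟩
  have hnull : μ (cell f b j \ strictCell f b j) = 0 := by
    refine measure_mono_null (fun x ⟨hx, hxs⟩ => ?_)
      (measure_iUnion_null fun i : {i // i ≠ j} => hties b i j i.2)
    obtain ⟨i, hij, hi⟩ : ∃ i ≠ j, f j x + b j ≤ f i x + b i := by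
      simpa [strictCell] using hxs
    exact mem_iUnion.2 ⟨⟨i, hij⟩, (hx i).antisymm hi⟩
  calc μ.real (cell f b j) = μ.real (strictCell f b j) :=
        congrArg ENNReal.toReal (measure_eq_measure_of_null_sdiff strictCell_subset_cell hnull).symm
    _ ≤ A j := measureReal_strictCell_le_of_forall_le_energy hfm hf hmin j

end Alexandrov

open Alexandrov in
theorem alexandrov_existence_general (n k : ℕ)
    (Ω : Set (EuclideanSpace ℝ (Fin n))) (hΩc : IsCompact Ω)
    (p : Fin k → EuclideanSpace ℝ (Fin n)) (hp : Function.Injective p)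
    (σ : EuclideanSpace ℝ (Fin n) → ℝ) (hσ : ContinuousOn σ Ω)
    (hσpos : ∀ x ∈ Ω, 0 < σ x)
    (A : Fin k → ℝ) (hA : ∀ i, 0 < A i)
    (hAsum : ∑ i, A i = ∫ x in Ω, σ x) :
    ∃ b : Fin k → ℝ, ∀ i,
      (∫ x in ({x : EuclideanSpace ℝ (Fin n) |
          ∀ j, ⟪x, p j⟫ + b j ≤ ⟪x, p i⟫ + b i} ∩ Ω), σ x) = A i := by
  obtain hk | hk := isEmpty_or_nonempty (Fin k)
  · exact ⟨0, isEmptyElim⟩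
  have hΩm := hΩc.measurableSet
  have hσint : IntegrableOn σ Ω := hσ.integrableOn_compact hΩc
  set μ := (volume.restrict Ω).withDensity fun x => ENNReal.ofReal (σ x)
  have : IsFiniteMeasure μ := isFiniteMeasure_withDensity_ofReal hσint.2
  have hμ : ∀ s, MeasurableSet s → μ.real s = ∫ x in s ∩ Ω, σ x := fun s hs => by
    rw [measureReal_withDensity_ofReal hσint
      ((ae_restrict_mem hΩm).mono fun x hx => (hσpos x hx).le) hs, Measure.restrict_restrict hs]
  have hμΩ : ∀ᵐ x ∂μ, x ∈ Ω := (withDensity_absolutelyContinuous _ _).ae_le (ae_restrict_mem hΩm)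
  have hμvol : μ ≪ volume := (withDensity_absolutelyContinuous _ _).trans
    (Measure.absolutelyContinuous_of_le Measure.restrict_le_self)
  have hf : ∀ i, Continuous fun x : EuclideanSpace ℝ (Fin n) => ⟪x, p i⟫ :=
    fun i => continuous_id.inner continuous_const
  have hfm := fun i => (hf i).measurable
  have hfμ : ∀ i, Integrable (fun x => ⟪x, p i⟫) μ := fun i => by
    rw [← Measure.restrict_eq_self_of_ae_mem hμΩ]
    exact (hf i).continuousOn.integrableOn_compact hΩc
  obtain ⟨b, hb⟩ := exists_measureReal_cell_eq hfm hfμ hA (by rw [hμ _ .univ, univ_inter, hAsum])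
    fun b i j hij => hμvol (addHaar_setOf_inner_add_eq_inner_add volume (hp.ne hij) _ _)
  exact ⟨b, fun i => (hμ _ (measurableSet_cell hfm b i)).symm.trans (hb i)⟩

/-- Existence in Alexandrov's theorem (weighted version): there is a height vector
`b` whose cells `W_i(b)` carry the prescribed masses `A_i`. -/
theorem alexandrov_existence (n k : ℕ)
    (Ω : Set (EuclideanSpace ℝ (Fin n))) (hΩc : IsCompact Ω) (hΩconv : Convex ℝ Ω)
    (hΩint : (interior Ω).Nonempty)
    (p : Fin k → EuclideanSpace ℝ (Fin n)) (hp : Function.Injective p)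
    (σ : EuclideanSpace ℝ (Fin n) → ℝ) (hσ : ContinuousOn σ Ω)
    (hσpos : ∀ x ∈ Ω, 0 < σ x)
    (A : Fin k → ℝ) (hA : ∀ i, 0 < A i)
    (hAsum : ∑ i, A i = ∫ x in Ω, σ x) :
    ∃ b : Fin k → ℝ, ∀ i,
      (∫ x in ({x : EuclideanSpace ℝ (Fin n) |
          ∀ j, ⟪x, p j⟫ + b j ≤ ⟪x, p i⟫ + b i} ∩ Ω), σ x) = A i :=
  alexandrov_existence_general n k Ω hΩc p hp σ hσ hσpos A hA hAsum
end
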